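/- arXiv:math/9711217 — 10 statements merged into one kernel-verified Lean document; each statement's English description precedes it below -/
import Mathlib

section
/- Even power sums of the roots of a parity polynomial: if P is monic of degree N ≥ 2 over ℂ with P(−X) = (−1)^N P(X), then with M := ⌊N/2⌋, for every l ≥ 1 the normalized power sum m_{2l}(N) := (1/N) Σ_{i=1}^N x_i^{2l} equals (2/N) · Σ over all tuples (n_1,…,n_M) of natural numbers with Σ_{m=1}^M m·n_m = l of (−1)^{Σ_m n_m} · l · (Σ_m n_m − 1)! / (n_1!⋯n_M!) · σ_2^{n_1} σ_4^{n_2} ⋯ σ_{2M}^{n_M}. -/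
open Polynomial Finset
open scoped Nat

/-!
Since `P(-X) = ±P(X)`, the multiset of roots is stable under `x ↦ -x`, so the odd elementary
symmetric functions vanish. Newton's identities in even degree then collapse to
`q l + σ 2 q (l - 1) + ⋯ + σ (2l - 2) q 1 = -2l σ (2l)` for `q j = Σ i, x i ^ (2j)`: up to the
factor `2`, these are Newton's identities for the reciprocal roots of `1 + σ 2 t + ⋯ + σ (2M) t^M`,
whose power sums are given by the Girard–Waring formula.

The Girard–Waring formula is checked against this recursion coefficientwise: for a tuple `n` with
at least two parts, removing one part in all possible ways reproduces the coefficient of `n` with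
the opposite sign, while the tuples with a single part produce the term `-l σ (2l)`.
-/

theorem Polynomial.roots_map_neg_of_comp_neg_X {R : Type*} [CommRing R] [IsDomain R] {p : R[X]}
    {N : ℕ} (h : p.comp (-X) = (-1) ^ N * p) : p.roots.map Neg.neg = p.roots := by
  rw [← roots_comp_neg_X, h]
  rcases neg_one_pow_eq_or R[X] N with h | h <;> simp [h]

theorem Multiset.esymm_eq_zero_of_map_neg_eq {R : Type*} [CommRing R] [IsAddTorsionFree R]
    {s : Multiset R} (hs : s.map Neg.neg = s) {k : ℕ} (hk : Odd k) : s.esymm k = 0 := by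
  have h := s.esymm_neg k
  rwa [hs, hk.neg_one_pow, neg_one_mul, self_eq_neg] at h

theorem mul_esymm_map_eq_sum {ι R : Type*} [Fintype ι] [CommRing R] (x : ι → R) (k : ℕ) :
    k * (univ.val.map x).esymm k = (-1) ^ (k + 1) *
      ∑ a ∈ antidiagonal k with a.1 < k,
        (-1) ^ a.1 * (univ.val.map x).esymm a.1 * ∑ i, x i ^ a.2 := by
  have h := congrArg (MvPolynomial.aeval x) (MvPolynomial.mul_esymm_eq_sum ι R k)
  simpa only [map_mul, map_sum, map_pow, map_neg, map_one, map_natCast, MvPolynomial.psum,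
    MvPolynomial.aeval_X, MvPolynomial.aeval_esymm_eq_multiset_esymm] using h

theorem Finset.sum_antidiagonal_filter_fst_lt {β : Type*} [AddCommMonoid β] (g : ℕ → ℕ → β)
    (k : ℕ) :
    ∑ a ∈ antidiagonal k with a.1 < k, g a.1 a.2 = ∑ i ∈ range k, g i (k - i) := by
  rw [sum_filter, Nat.sum_antidiagonal_eq_sum_range_succ (fun i j => if i < k then g i j else 0),
    sum_range_succ, if_neg (lt_irrefl k), add_zero]
  exact sum_congr rfl fun i hi => if_pos (mem_range.mp hi)

theorem Finset.sum_range_two_mul_of_odd_eq_zero {β : Type*} [AddCommMonoid β] {g : ℕ → β}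
    (hg : ∀ i, Odd i → g i = 0) (l : ℕ) :
    ∑ i ∈ range (2 * l), g i = ∑ j ∈ range l, g (2 * j) := by
  induction l with
  | zero => simp
  | succ l ih =>
    rw [mul_add, mul_one, sum_range_succ, sum_range_succ, sum_range_succ, ih,
      hg _ (odd_two_mul_add_one l), add_zero]

theorem sum_range_esymm_two_mul_mul_psum {ι R : Type*} [Fintype ι] [CommRing R]
    (x : ι → R) (hodd : ∀ k, Odd k → (univ.val.map x).esymm k = 0) (l : ℕ) :
    ∑ j ∈ range l, (univ.val.map x).esymm (2 * j) * ∑ i, x i ^ (2 * (l - j)) =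
      -(2 * l * (univ.val.map x).esymm (2 * l)) := by
  have h := mul_esymm_map_eq_sum x (2 * l)
  rw [sum_antidiagonal_filter_fst_lt
      (fun i j => (-1) ^ i * (univ.val.map x).esymm i * ∑ k, x k ^ j),
    sum_range_two_mul_of_odd_eq_zero (fun i hi => by simp [hodd i hi])] at h
  simp only [← Nat.mul_sub, pow_succ, even_two_mul, Even.neg_one_pow, one_mul] at h
  push_cast at h
  linear_combination h

section

variable {ι : Type*} [DecidableEq ι]

theorem tsub_single_add_single {n : ι → ℕ} {i : ι} (hi : n i ≠ 0) :
    n - Pi.single i 1 + Pi.single i 1 = n := by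
  ext j
  rcases eq_or_ne j i with rfl | hj
  · simp only [Pi.add_apply, Pi.sub_apply, Pi.single_eq_same]
    omega
  · simp [Pi.single_eq_of_ne hj]

variable [Fintype ι]

theorem Fintype.exists_eq_single_of_sum_eq_one {n : ι → ℕ} (h : ∑ i, n i = 1) :
    ∃ i, n = Pi.single i 1 := by
  obtain ⟨i, hi⟩ := (Finsupp.sum_eq_one_iff (Finsupp.equivFunOnFinite.symm n)).mp
    (by rwa [Finsupp.sum_fintype _ _ fun _ => rfl])
  refine ⟨i, ?_⟩
  simpa [← Finsupp.single_eq_pi_single] using congrArg Finsupp.equivFunOnFinite hi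

theorem Fintype.sum_add_single_one (n : ι → ℕ) (i : ι) :
    ∑ j, (n + Pi.single i 1 : ι → ℕ) j = ∑ j, n j + 1 := by
  simp [sum_add_distrib]

theorem Fintype.prod_factorial_add_single_one (n : ι → ℕ) (i : ι) :
    ∏ j, ((n + Pi.single i 1 : ι → ℕ) j)! = (n i + 1) * ∏ j, (n j)! := by
  rw [Fintype.prod_eq_mul_prod_compl i, Fintype.prod_eq_mul_prod_compl i (fun j => (n j)!),
    ← mul_assoc, Pi.add_apply, Pi.single_eq_same, ← Nat.factorial_succ]
  congr 1
  exact Finset.prod_congr rfl fun j hj => by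
    rw [Pi.add_apply, Pi.single_eq_of_ne (by simpa using hj), add_zero]

end

theorem Fin.sum_filter_val_mem {β : Type*} [AddCommMonoid β] {M : ℕ} {g : ℕ → β}
    (hg : ∀ j, M ≤ j → g j = 0) (s : Finset ℕ) :
    ∑ m ∈ univ.filter fun m : Fin M => (m : ℕ) ∈ s, g m = ∑ j ∈ s, g j := by
  rw [sum_filter, Fin.sum_univ_eq_sum_range (fun j => if j ∈ s then g j else 0), ← sum_filter]
  refine sum_subset (fun j hj => (mem_filter.mp hj).2) fun j hjs hj => hg j ?_
  simpa [hjs] using hj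

section Waring

variable {M : ℕ}

def tupleWeight (n : Fin M → ℕ) : ℕ := ∑ m : Fin M, ((m : ℕ) + 1) * n m

theorem tupleWeight_add (n n' : Fin M → ℕ) :
    tupleWeight (n + n') = tupleWeight n + tupleWeight n' := by
  simp only [tupleWeight, Pi.add_apply, mul_add, sum_add_distrib]

theorem tupleWeight_single (m : Fin M) : tupleWeight (Pi.single m 1) = m + 1 := by
  simp [tupleWeight, Pi.single_apply]

theorem add_sum_le_tupleWeight {n : Fin M → ℕ} {m : Fin M} (hm : n m ≠ 0) :
    m + ∑ j, n j ≤ tupleWeight n := by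
  have h : (m : ℕ) ≤ ∑ j : Fin M, (j : ℕ) * n j :=
    (Nat.le_mul_of_pos_right _ (Nat.pos_of_ne_zero hm)).trans
      (single_le_sum (f := fun j : Fin M => (j : ℕ) * n j) (fun _ _ => Nat.zero_le _)
        (mem_univ m))
  simp only [tupleWeight, add_mul, one_mul, sum_add_distrib]
  omega

/-- `n m` is the multiplicity of the part `m + 1` in a partition of `l` into parts at most `M`. -/
def tuplesOfWeight (M l : ℕ) : Finset (Fin M → ℕ) :=
  (Fintype.piFinset fun _ : Fin M => range (l + 1)).filter fun n => tupleWeight n = l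

theorem mem_tuplesOfWeight {l : ℕ} {n : Fin M → ℕ} :
    n ∈ tuplesOfWeight M l ↔ tupleWeight n = l := by
  refine ⟨fun h => (mem_filter.mp h).2, fun h => mem_filter.mpr
    ⟨Fintype.mem_piFinset.mpr fun m => mem_range.mpr ?_, h⟩⟩
  have := (Nat.le_mul_of_pos_left (n m) m.succ_pos).trans
    (single_le_sum (f := fun m : Fin M => ((m : ℕ) + 1) * n m) (fun _ _ => Nat.zero_le _)
      (mem_univ m))
  rw [← h, tupleWeight]
  omega

theorem sum_tuplesOfWeight_add_single {β : Type*} [AddCommMonoid β] (F : (Fin M → ℕ) → β)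
    (m : Fin M) (l : ℕ) :
    ∑ n ∈ tuplesOfWeight M l, F (n + Pi.single m 1) =
      ∑ n ∈ tuplesOfWeight M (l + (m + 1)) with n m ≠ 0, F n := by
  refine sum_nbij' (· + Pi.single m 1) (· - Pi.single m 1) ?_ ?_ ?_ ?_ fun _ _ => rfl
  · intro n hn
    simp_all [mem_tuplesOfWeight, tupleWeight_add, tupleWeight_single]
  · intro n hn
    rw [mem_filter, mem_tuplesOfWeight] at hn
    have h := tupleWeight_add (n - Pi.single m 1) (Pi.single m 1)
    rw [tsub_single_add_single hn.2, tupleWeight_single] at h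
    rw [mem_tuplesOfWeight]
    omega
  · intro n _
    exact add_tsub_cancel_right n _
  · intro n hn
    exact tsub_single_add_single (mem_filter.mp hn).2

theorem sum_tuplesOfWeight_filter_sum_eq_one {β : Type*} [AddCommMonoid β]
    (F : (Fin M → ℕ) → β) (l : ℕ) :
    ∑ n ∈ tuplesOfWeight M l with ∑ m, n m = 1, F n =
      ∑ m ∈ univ.filter fun m : Fin M => (m : ℕ) + 1 = l, F (Pi.single m 1) := by
  symm
  refine sum_bij (fun m _ => Pi.single m 1) ?_ ?_ ?_ fun _ _ => rfl
  · intro m hm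
    simpa [mem_tuplesOfWeight, tupleWeight_single] using hm
  · intro m _ m' _ h
    by_contra hne
    simpa [Pi.single_eq_of_ne hne] using congrFun h m
  · intro n hn
    rw [mem_filter, mem_tuplesOfWeight] at hn
    obtain ⟨m, rfl⟩ := Fintype.exists_eq_single_of_sum_eq_one hn.2
    exact ⟨m, by simpa [tupleWeight_single] using hn.1, rfl⟩

variable {K : Type*} [Field K]

def tupleMonomial (f : ℕ → K) (n : Fin M → ℕ) : K := ∏ m : Fin M, f ((m : ℕ) + 1) ^ n m

theorem tupleMonomial_add_single (f : ℕ → K) (n : Fin M → ℕ) (m : Fin M) :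
    tupleMonomial f (n + Pi.single m 1) = f ((m : ℕ) + 1) * tupleMonomial f n := by
  simp only [tupleMonomial, Pi.add_apply, pow_add, prod_mul_distrib]
  rw [mul_comm, Fintype.prod_eq_single m fun j hj => by simp [Pi.single_eq_of_ne hj]]
  simp

theorem tupleMonomial_single (f : ℕ → K) (m : Fin M) :
    tupleMonomial f (Pi.single m 1) = f ((m : ℕ) + 1) := by
  simpa [tupleMonomial] using tupleMonomial_add_single f 0 m

def waringCoeff (n : Fin M → ℕ) : K :=
  (-1) ^ (∑ m, n m) * tupleWeight n * ((∑ m, n m) - 1)! / ∏ m, ((n m)! : K)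

/-- The Girard–Waring expression of the `l`-th power sum of the reciprocal roots of
`1 + f 1 t + ⋯ + f M t ^ M` in terms of its coefficients. -/
def waringSum (M : ℕ) (f : ℕ → K) (l : ℕ) : K :=
  ∑ n ∈ tuplesOfWeight M l, waringCoeff n * tupleMonomial f n

theorem waringCoeff_single (m : Fin M) :
    waringCoeff (Pi.single m 1) = -(((m : ℕ) : K) + 1) := by
  have h : ∏ j, ((Pi.single m 1 : Fin M → ℕ) j)! = 1 :=
    prod_eq_one fun j _ => by rcases eq_or_ne j m with rfl | hj <;> simp [*]
  simp [waringCoeff, tupleWeight_single, ← Nat.cast_prod, h]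

theorem mul_waringSum_eq_sum (f : ℕ → K) (m : Fin M) (l : ℕ) :
    f ((m : ℕ) + 1) * waringSum M f l =
      ∑ n ∈ tuplesOfWeight M (l + (m + 1)) with n m ≠ 0,
        waringCoeff (n - Pi.single m 1) * tupleMonomial f n := by
  rw [waringSum, mul_sum, ← sum_tuplesOfWeight_add_single]
  refine sum_congr rfl fun n _ => ?_
  rw [tupleMonomial_add_single, add_tsub_cancel_right]
  ring

theorem sum_range_mul_waringSum_eq_sum {f : ℕ → K} (hf : ∀ j, M < j → f j = 0) (k : ℕ) :
    ∑ j ∈ range k, f (j + 1) * waringSum M f (k - j) =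
      ∑ n ∈ tuplesOfWeight M (k + 1),
        ∑ m ∈ univ.filter fun m : Fin M => (m : ℕ) < k ∧ n m ≠ 0,
          waringCoeff (n - Pi.single m 1) * tupleMonomial f n := by
  rw [← Fin.sum_filter_val_mem (M := M) (g := fun j => f (j + 1) * waringSum M f (k - j))
      (fun j hj => by simp [hf (j + 1) (by omega)]) (range k),
    sum_congr rfl fun m hm => by
      have := mem_range.mp (mem_filter.mp hm).2
      rw [mul_waringSum_eq_sum, show k - m + (m + 1) = k + 1 by omega]]
  exact sum_comm' fun m n => by simp only [mem_filter, mem_univ, mem_range, true_and]; tauto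

theorem sum_tuplesOfWeight_sum_eq_one {f : ℕ → K} (hf : ∀ j, M < j → f j = 0) (k : ℕ) :
    ∑ n ∈ tuplesOfWeight M (k + 1) with ∑ m, n m = 1, waringCoeff n * tupleMonomial f n =
      -((k + 1) * f (k + 1)) := by
  have h := Fin.sum_filter_val_mem (M := M) (g := fun j => -((j + 1 : K) * f (j + 1)))
    (fun j hj => by simp [hf (j + 1) (by omega)]) {k}
  rw [sum_singleton] at h
  rw [sum_tuplesOfWeight_filter_sum_eq_one, ← h]
  refine sum_congr (filter_congr fun m _ => by simp) fun m _ => ?_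
  rw [waringCoeff_single, tupleMonomial_single]
  ring

variable [CharZero K]

theorem waringCoeff_sub_single {n : Fin M → ℕ} {m : Fin M} {s : ℕ} (hm : n m ≠ 0)
    (hs : ∑ j, n j = s + 2) :
    waringCoeff (n - Pi.single m 1) = (-1) ^ (s + 1) * s ! / (∏ j, ((n j)! : K)) *
      (((tupleWeight n : K) - (m + 1)) * n m) := by
  set n₀ := n - Pi.single m 1
  have hn₀ : n₀ + Pi.single m 1 = n := tsub_single_add_single hm
  have hsum : ∑ j, n₀ j = s + 1 := by
    have := Fintype.sum_add_single_one n₀ m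
    rw [hn₀] at this
    omega
  have hw : (tupleWeight n : K) = tupleWeight n₀ + (m + 1) := by
    rw [← hn₀, tupleWeight_add, tupleWeight_single]
    push_cast
    ring
  have hprod : ∏ j, ((n j)! : K) = n m * ∏ j, ((n₀ j)! : K) := by
    have h := Fintype.prod_factorial_add_single_one n₀ m
    have hm₀ : n₀ m + 1 = n m := by simpa using congrFun hn₀ m
    rw [hn₀, hm₀] at h
    exact_mod_cast h
  have hD : ∏ j, ((n₀ j)! : K) ≠ 0 :=
    prod_ne_zero_iff.mpr fun j _ => by simp [Nat.factorial_ne_zero]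
  rw [hprod, waringCoeff, hsum, Nat.add_sub_cancel, hw]
  field_simp
  ring

theorem waringCoeff_add_sum_sub_single {n : Fin M → ℕ} (hn : 2 ≤ ∑ m, n m) :
    waringCoeff n + ∑ m with n m ≠ 0, waringCoeff (n - Pi.single m 1) = (0 : K) := by
  obtain ⟨s, hs⟩ : ∃ s, ∑ m, n m = s + 2 := ⟨_, (Nat.sub_add_cancel hn).symm⟩
  have hlin : ∑ m, ((tupleWeight n : K) - (m + 1)) * n m = tupleWeight n * (s + 1) := by
    have hw : (tupleWeight n : K) = ∑ m : Fin M, (((m : ℕ) : K) + 1) * n m := by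
      push_cast [tupleWeight]
      rfl
    have hs' : ∑ m, (n m : K) = s + 2 := by exact_mod_cast hs
    rw [sum_congr rfl fun m _ => sub_mul _ _ _, sum_sub_distrib, ← mul_sum, hs', ← hw]
    ring
  have hD : ∏ m, ((n m)! : K) ≠ 0 :=
    prod_ne_zero_iff.mpr fun m _ => by simp [Nat.factorial_ne_zero]
  rw [sum_congr rfl fun m hm => waringCoeff_sub_single (mem_filter.mp hm).2 hs, ← mul_sum,
    sum_filter_of_ne fun m _ h => by contrapose! h; simp [h], hlin, waringCoeff, hs,
    show s + 2 - 1 = s + 1 by omega, Nat.factorial_succ]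
  field_simp
  push_cast
  ring

theorem waringCoeff_add_sum_lt_sub_single {n : Fin M → ℕ} {k : ℕ}
    (hn : tupleWeight n = k + 1) :
    waringCoeff n + ∑ m ∈ univ.filter fun m : Fin M => (m : ℕ) < k ∧ n m ≠ 0,
      waringCoeff (n - Pi.single m 1) = if ∑ m, n m = 1 then waringCoeff n else (0 : K) := by
  split_ifs with h1
  · obtain ⟨m₀, rfl⟩ := Fintype.exists_eq_single_of_sum_eq_one h1
    rw [tupleWeight_single] at hn
    refine add_eq_left.mpr (sum_eq_zero fun m hm => absurd (mem_filter.mp hm).2 ?_)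
    rintro ⟨hmk, hm₀⟩
    rcases eq_or_ne m m₀ with rfl | hne
    · omega
    · exact hm₀ (Pi.single_eq_of_ne hne _)
  · have h0 : ∑ m, n m ≠ 0 := fun h0 => by
      have : tupleWeight n = 0 := sum_eq_zero fun m _ => by
        rw [sum_eq_zero_iff.mp h0 m (mem_univ m), mul_zero]
      omega
    rw [filter_congr fun m _ => ⟨And.right, fun hm =>
      ⟨by have := add_sum_le_tupleWeight hm; omega, hm⟩⟩]
    exact waringCoeff_add_sum_sub_single (by omega)

theorem waringSum_succ_add_sum {f : ℕ → K} (hf : ∀ j, M < j → f j = 0) (k : ℕ) :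
    waringSum M f (k + 1) + ∑ j ∈ range k, f (j + 1) * waringSum M f (k - j) =
      -((k + 1) * f (k + 1)) := by
  rw [waringSum, sum_range_mul_waringSum_eq_sum hf, ← sum_add_distrib,
    ← sum_tuplesOfWeight_sum_eq_one hf, sum_filter]
  refine sum_congr rfl fun n hn => ?_
  rw [← sum_mul, ← add_mul, waringCoeff_add_sum_lt_sub_single (mem_tuplesOfWeight.mp hn),
    ite_mul, zero_mul]

theorem eq_mul_waringSum_of_sum_range_mul_eq {f q : ℕ → K} {c : K} (hf₀ : f 0 = 1)
    (hf : ∀ j, M < j → f j = 0) (hq : ∀ l, ∑ j ∈ range l, f j * q (l - j) = -(c * l * f l))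
    (k : ℕ) : q (k + 1) = c * waringSum M f (k + 1) := by
  induction k using Nat.strong_induction_on with
  | _ k ih =>
  have hnewton := hq (k + 1)
  rw [sum_range_succ', hf₀, one_mul] at hnewton
  simp only [Nat.add_sub_add_right, Nat.sub_zero] at hnewton
  have hlower : ∑ j ∈ range k, f (j + 1) * q (k - j) =
      c * ∑ j ∈ range k, f (j + 1) * waringSum M f (k - j) := by
    rw [mul_sum]
    refine sum_congr rfl fun j hj => ?_
    obtain ⟨i, hi⟩ : ∃ i, k - j = i + 1 := ⟨k - j - 1, by have := mem_range.mp hj; omega⟩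
    rw [hi, ih i (by omega)]
    ring
  have hW := waringSum_succ_add_sum hf k
  push_cast at hnewton
  linear_combination hnewton - c * hW - hlower

end Waring

theorem even_power_sums_of_parity_general (N : ℕ) (x : Fin N → ℂ)
    (P : Polynomial ℂ) (hP : P = ∏ i, (X - C (x i)))
    (hpar : P.comp (-X) = (-1) ^ N * P)
    (σ : ℕ → ℂ)
    (hσ : ∀ k, σ k = ∑ s ∈ Finset.powersetCard k (Finset.univ : Finset (Fin N)), ∏ i ∈ s, x i)
    (M : ℕ) (hM : M = N / 2)
    (l : ℕ) (hl : 1 ≤ l) :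
    (1 / (N : ℂ)) * ∑ i, x i ^ (2 * l) =
      (2 / (N : ℂ)) *
        ∑ n ∈ (Fintype.piFinset fun _ : Fin M => Finset.range (l + 1)).filter
            (fun n => ∑ m : Fin M, ((m : ℕ) + 1) * n m = l),
          (-1 : ℂ) ^ (∑ m : Fin M, n m) * l *
            (Nat.factorial ((∑ m : Fin M, n m) - 1) : ℂ) /
            (∏ m : Fin M, (Nat.factorial (n m) : ℂ)) *
            ∏ m : Fin M, σ (2 * ((m : ℕ) + 1)) ^ n m := by
  have hσ' : ∀ k, σ k = (univ.val.map x).esymm k := fun k => by rw [hσ, esymm_map_val]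
  have hroots : P.roots = univ.val.map x := by
    simpa [hP, prod_eq_multiset_prod, Multiset.map_map, Function.comp_def] using
      roots_multiset_prod_X_sub_C (univ.val.map x)
  have hodd : ∀ k, Odd k → (univ.val.map x).esymm k = 0 := fun k hk =>
    Multiset.esymm_eq_zero_of_map_neg_eq (hroots ▸ roots_map_neg_of_comp_neg_X hpar) hk
  have hf : ∀ j, M < j → σ (2 * j) = 0 := fun j hj => by
    rw [hσ, powersetCard_eq_empty.mpr (by rw [card_univ, Fintype.card_fin]; omega), sum_empty]
  obtain ⟨k, rfl⟩ := Nat.exists_eq_add_of_le' hl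
  have hq := eq_mul_waringSum_of_sum_range_mul_eq (f := fun j => σ (2 * j))
    (q := fun j => ∑ i, x i ^ (2 * j)) (c := 2) (by simp [hσ]) hf
    (fun l => by simpa only [hσ'] using sum_range_esymm_two_mul_mul_psum x hodd l) k
  rw [hq, waringSum, mul_sum, mul_sum, mul_sum]
  refine sum_congr rfl fun n hn => ?_
  rw [waringCoeff, tupleMonomial, mem_tuplesOfWeight.mp hn]
  ring

/-- **Even power sums of the roots of a parity polynomial.** Let `P` be monic of degree
`N ≥ 2` over `ℂ` with roots `x 1, …, x N` (with multiplicity) and `P(−X) = (−1)^N P(X)`,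
and let `σ k` be the `k`-th elementary symmetric function of the roots.  With
`M := ⌊N/2⌋`, for every `l ≥ 1` the normalized power sum `m_{2l}(N) = (1/N) Σ_i (x i)^{2l}`
equals `(2/N)` times the sum, over all tuples `(n_1, …, n_M)` of natural numbers with
`Σ_{m=1}^M m·n_m = l`, of
`(−1)^(Σ_m n_m) · l · (Σ_m n_m − 1)! / (n_1!⋯n_M!) · σ_2^{n_1} σ_4^{n_2} ⋯ σ_{2M}^{n_M}`. -/
theorem even_power_sums_of_parity (N : ℕ) (hN : 2 ≤ N) (x : Fin N → ℂ)
    (P : Polynomial ℂ) (hP : P = ∏ i, (X - C (x i)))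
    (hpar : P.comp (-X) = (-1) ^ N * P)
    (σ : ℕ → ℂ)
    (hσ : ∀ k, σ k = ∑ s ∈ Finset.powersetCard k (Finset.univ : Finset (Fin N)), ∏ i ∈ s, x i)
    (M : ℕ) (hM : M = N / 2)
    (l : ℕ) (hl : 1 ≤ l) :
    (1 / (N : ℂ)) * ∑ i, x i ^ (2 * l) =
      (2 / (N : ℂ)) *
        ∑ n ∈ (Fintype.piFinset fun _ : Fin M => Finset.range (l + 1)).filter
            (fun n => ∑ m : Fin M, ((m : ℕ) + 1) * n m = l),
          (-1 : ℂ) ^ (∑ m : Fin M, n m) * l *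
            (Nat.factorial ((∑ m : Fin M, n m) - 1) : ℂ) /
            (∏ m : Fin M, (Nat.factorial (n m) : ℂ)) *
            ∏ m : Fin M, σ (2 * ((m : ℕ) + 1)) ^ n m :=
  even_power_sums_of_parity_general N x P hP hpar σ hσ M hM l hl
end

section
/- Stabilized moments of Chebyshev T zeros (correction of Case's claim): for every l ≥ 1 and every N ≥ l + 1, m_{2l}^{(T)}(N) = binom(2l, l)/4^l, i.e. (1/N) Σ_{i=1}^N (cos((2i−1)π/(2N)))^{2l} = binom(2l, l)/2^{2l}. -/
/-!
Write `2 cos θ = e^{iθ} + e^{-iθ}`; the binomial theorem gives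
`(2 cos θ)^{2l} = ∑_j C(2l, j) e^{2i(j-l)θ}`. At the nodes `θ_i = (2i+1)π/(2N)` the numbers
`e^{2iθ_i}` are `e^{iπ/N}` times the `N`-th roots of unity, so `∑_i e^{2ikθ_i}` vanishes unless
`N ∣ k`. As `|j - l| ≤ l < N`, only the middle term `j = l` survives, and it contributes
`N · C(2l, l)`.
-/

open Finset Real

theorem IsPrimitiveRoot.sum_zpow_pow_eq_zero {K : Type*} [Field K] {ζ : K} {N : ℕ}
    (hζ : IsPrimitiveRoot ζ N) {k : ℤ} (hk : ¬ (N : ℤ) ∣ k) :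
    ∑ i ∈ range N, (ζ ^ k) ^ i = 0 := by
  have hne : ζ ^ k ≠ 1 := fun h => hk ((hζ.zpow_eq_one_iff_dvd k).mp h)
  rw [geom_sum_eq hne, ← zpow_natCast, ← zpow_mul, mul_comm, zpow_mul, zpow_natCast,
    hζ.pow_eq_one, one_zpow, sub_self, zero_div]

open Complex in
theorem Complex.sum_exp_int_mul_equally_spaced_eq_zero (a : ℂ) {N : ℕ} {k : ℤ}
    (hk : ¬ (N : ℤ) ∣ k) :
    ∑ i ∈ range N, exp (k * (a + 2 * π * i / N) * I) = 0 := by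
  rcases eq_or_ne N 0 with rfl | hN
  · exact sum_range_zero _
  have hterm : ∀ i : ℕ, exp (k * (a + 2 * π * i / N) * I)
      = exp (k * a * I) * (exp (2 * π * I / N) ^ k) ^ i := by
    intro i
    rw [← exp_int_mul, ← exp_nat_mul, ← exp_add]
    ring_nf
  simp only [hterm, ← mul_sum, (isPrimitiveRoot_exp N hN).sum_zpow_pow_eq_zero hk, mul_zero]

open Complex in
theorem Complex.two_cos_pow (x : ℂ) (n : ℕ) :
    (2 * cos x) ^ n = ∑ j ∈ range (n + 1), n.choose j * exp ((2 * j - n) * x * I) := by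
  rw [two_cos, add_pow]
  refine sum_congr rfl fun j hj => ?_
  have hjn : j ≤ n := Nat.lt_succ_iff.mp (mem_range.mp hj)
  rw [← exp_nat_mul, ← exp_nat_mul, ← exp_add, Nat.cast_sub hjn, mul_comm]
  ring_nf

theorem sum_two_cos_pow_chebyshev_nodes {l N : ℕ} (hN : l < N) :
    ∑ i ∈ range N, (2 * Real.cos ((2 * (i : ℝ) + 1) * π / (2 * N))) ^ (2 * l)
      = N * (2 * l).choose l := by
  have hN0 : (N : ℂ) ≠ 0 := by exact_mod_cast (show N ≠ 0 by omega)
  have hcharacter : ∀ j ∈ range (2 * l + 1),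
      ∑ i ∈ range N,
          Complex.exp ((2 * j - (2 * l : ℕ)) * ((2 * (i : ℂ) + 1) * π / (2 * N)) * Complex.I)
        = if j = l then (N : ℂ) else 0 := by
    intro j hj
    split_ifs with hjl
    · subst hjl
      simp
    have hlt : |(j : ℤ) - l| < N := abs_lt.mpr ⟨by omega, by have := mem_range.mp hj; omega⟩
    have hdvd : ¬ (N : ℤ) ∣ (j - l : ℤ) := fun h =>
      hjl (by have := Int.eq_zero_of_abs_lt_dvd h hlt; omega)
    rw [← Complex.sum_exp_int_mul_equally_spaced_eq_zero (π / N) hdvd]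
    refine sum_congr rfl fun i _ => ?_
    congr 1
    push_cast
    field_simp
    ring
  have hcomplex := calc
      ∑ i ∈ range N, (2 * Complex.cos ((2 * (i : ℂ) + 1) * π / (2 * N))) ^ (2 * l)
        = ∑ j ∈ range (2 * l + 1), ((2 * l).choose j : ℂ) * ∑ i ∈ range N,
            Complex.exp ((2 * j - (2 * l : ℕ)) * ((2 * (i : ℂ) + 1) * π / (2 * N)) * Complex.I) := by
          simp only [Complex.two_cos_pow, mul_sum]
          exact sum_comm
      _ = N * (2 * l).choose l := by
          rw [sum_congr rfl fun j hj => congrArg _ (hcharacter j hj)]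
          simp only [mul_ite, mul_zero, sum_ite_eq', mem_range]
          rw [if_pos (by omega), mul_comm]
  exact_mod_cast hcomplex

theorem chebyshevT_zero_moments_stabilized_general (l N : ℕ) (hN : l + 1 ≤ N) :
    (1 / (N : ℝ)) *
        ∑ i ∈ Finset.range N,
          (Real.cos ((2 * (i : ℝ) + 1) * Real.pi / (2 * N))) ^ (2 * l) =
      (Nat.choose (2 * l) l : ℝ) / 4 ^ l := by
  have hN0 : (N : ℝ) ≠ 0 := by exact_mod_cast (show N ≠ 0 by omega)
  have hpow : ∀ x : ℝ, x ^ (2 * l) = (2 * x) ^ (2 * l) / 4 ^ l := fun x => by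
    rw [mul_pow, pow_mul 2, mul_div_right_comm]
    norm_num
  rw [sum_congr rfl fun i _ => hpow _, ← sum_div, sum_two_cos_pow_chebyshev_nodes hN]
  field_simp

/-- **Stabilized moments of Chebyshev `T` zeros (correction of Case's claim).**
For every `l ≥ 1` and every `N ≥ l + 1`,
`m_{2l}^{(T)}(N) = (1/N) Σ_{i=1}^N (cos((2i−1)π/(2N)))^{2l} = binom(2l, l)/4^l`. -/
theorem chebyshevT_zero_moments_stabilized (l N : ℕ) (hl : 1 ≤ l) (hN : l + 1 ≤ N) :
    (1 / (N : ℝ)) *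
        ∑ i ∈ Finset.range N,
          (Real.cos ((2 * (i : ℝ) + 1) * Real.pi / (2 * N))) ^ (2 * l) =
      (Nat.choose (2 * l) l : ℝ) / 4 ^ l :=
  chebyshevT_zero_moments_stabilized_general l N hN
end

section
/- Moments of the zeros of T_4 in terms of Chebyshev polynomials: for every l ≥ 1, m_{2l}^{(T)}(4) = T_l(√2)/(2√2)^l, i.e. (1/4) Σ_{i=1}^4 (cos((2i−1)π/8))^{2l} = T_l(√2)/(2√2)^l, where T_l denotes the l-th Chebyshev polynomial of the first kind evaluated at the real number √2. -/
/-!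
By the half-angle formula, `cos²((2i+1)π/8)` takes each of the values `(√2 ± 1)/(2√2)` twice.
Since `u = √2 + 1` and `v = √2 - 1` satisfy `u v = 1` and `u + v = 2√2`, the identity
`2 T_l((u + v)/2) = u^l + v^l` (Chebyshev polynomials are Dickson polynomials in disguise)
turns the moment into `T_l(√2)/(2√2)^l`.
-/

open Finset Real Polynomial

theorem Polynomial.Chebyshev.two_mul_T_eval_of_two_mul_eq_add {R : Type*} [CommRing R]
    {x u v : R} (hx : 2 * x = u + v) (huv : u * v = 1) (n : ℕ) :
    2 * (T R n).eval x = u ^ n + v ^ n := by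
  have hC : (C R n).eval (2 * x) = 2 * (T R n).eval x := by
    simpa [eval_comp] using congrArg (eval x) (C_comp_two_mul_X R n)
  rw [← hC, hx, ← dickson_one_one_eq_chebyshev_C, dickson_one_one_eval_add_inv u v huv]

theorem Real.cos_sq_pi_div_eight : cos (π / 8) ^ 2 = (√2 + 1) / (2 * √2) := by
  rw [cos_sq, show 2 * (π / 8) = π / 4 by ring, cos_pi_div_four]
  field_simp
  linear_combination mul_self_sqrt (zero_le_two (α := ℝ))

theorem Real.cos_sq_three_pi_div_eight : cos (3 * π / 8) ^ 2 = (√2 - 1) / (2 * √2) := by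
  rw [show 3 * π / 8 = π / 2 - π / 8 by ring, cos_pi_div_two_sub, sin_sq, cos_sq_pi_div_eight]
  field_simp
  ring

theorem sum_range_four_cos_odd_pi_div_eight_pow (l : ℕ) :
    ∑ i ∈ range 4, cos ((2 * (i : ℝ) + 1) * π / 8) ^ (2 * l) =
      2 * ((√2 + 1) / (2 * √2)) ^ l + 2 * ((√2 - 1) / (2 * √2)) ^ l := by
  have hcos_five : cos (5 * π / 8) ^ 2 = cos (3 * π / 8) ^ 2 := by
    rw [show 5 * π / 8 = π - 3 * π / 8 by ring, cos_pi_sub, neg_sq]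
  have hcos_seven : cos (7 * π / 8) ^ 2 = cos (π / 8) ^ 2 := by
    rw [show 7 * π / 8 = π - π / 8 by ring, cos_pi_sub, neg_sq]
  simp only [sum_range_succ, sum_range_zero, pow_mul]
  norm_num only [zero_add, one_mul, hcos_five, hcos_seven, cos_sq_pi_div_eight,
    cos_sq_three_pi_div_eight]
  ring

theorem chebyshevT_zero_moments_deg_four_general (l : ℕ) :
    (1 / (4 : ℝ)) *
        ∑ i ∈ Finset.range 4,
          (Real.cos ((2 * (i : ℝ) + 1) * Real.pi / 8)) ^ (2 * l) =
      (Polynomial.Chebyshev.T ℝ l).eval (Real.sqrt 2) / (2 * Real.sqrt 2) ^ l := by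
  have hT : 2 * (Chebyshev.T ℝ l).eval √2 = (√2 + 1) ^ l + (√2 - 1) ^ l :=
    Chebyshev.two_mul_T_eval_of_two_mul_eq_add (by ring)
      (by linear_combination mul_self_sqrt (zero_le_two (α := ℝ))) l
  calc _ = ((√2 + 1) ^ l + (√2 - 1) ^ l) / 2 / (2 * √2) ^ l := by
        rw [sum_range_four_cos_odd_pi_div_eight_pow, div_pow, div_pow]
        ring
    _ = _ := by rw [← hT]; ring

/-- **Moments of the zeros of `T₄` in terms of Chebyshev polynomials.** For every `l ≥ 1`,
`m_{2l}^{(T)}(4) = (1/4) Σ_{i=1}^4 (cos((2i−1)π/8))^{2l} = T_l(√2)/(2√2)^l`,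
where `T_l` is the `l`-th Chebyshev polynomial of the first kind. -/
theorem chebyshevT_zero_moments_deg_four (l : ℕ) (hl : 1 ≤ l) :
    (1 / (4 : ℝ)) *
        ∑ i ∈ Finset.range 4,
          (Real.cos ((2 * (i : ℝ) + 1) * Real.pi / 8)) ^ (2 * l) =
      (Polynomial.Chebyshev.T ℝ l).eval (Real.sqrt 2) / (2 * Real.sqrt 2) ^ l :=
  chebyshevT_zero_moments_deg_four_general l
end

section
/- Moments of the zeros of T_5 in terms of Chebyshev polynomials: for every l ≥ 1, m_{2l}^{(T)}(5) = (√5)^{l−2} · T_l(√5/2) / 2^{2(l−1)}, i.e. (1/5) Σ_{i=1}^5 (cos((2i−1)π/10))^{2l} = (√5)^{l−2} T_l(√5/2)/4^{l−1}. -/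
open Finset Real Polynomial

/-!
The zeros `cos((2i+1)π/10)` pair up as `x, -x` around the zero `cos(π/2) = 0`, so the moment
reduces to `2(c₁ˡ + c₃ˡ)/5` with `c₁ = cos²(π/10) = √5 φ/4` and `c₃ = cos²(3π/10) = √5 φ⁻¹/4`,
where `φ` is the golden ratio. Since `φ + φ⁻¹ = √5`, the point `√5/2` is `cosh (log φ)`, and
`T_l(cosh θ) = cosh(lθ)` gives `T_l(√5/2) = (φˡ + φ⁻ˡ)/2`.
-/

open scoped goldenRatio

theorem Polynomial.Chebyshev.T_real_eval_add_inv_div_two {a : ℝ} (ha : 0 < a) (n : ℤ) :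
    (T ℝ n).eval ((a + a⁻¹) / 2) = (a ^ n + (a ^ n)⁻¹) / 2 := by
  rw [← cosh_log ha, T_real_cosh, ← log_zpow, cosh_log (zpow_pos ha n)]

theorem Real.goldenRatio_add_inv_goldenRatio : φ + φ⁻¹ = √5 := by
  rw [inv_goldenRatio, ← sub_eq_add_neg, goldenRatio_sub_goldenConj]

theorem Polynomial.Chebyshev.T_real_eval_sqrt_five_div_two (n : ℕ) :
    (T ℝ n).eval (√5 / 2) = (φ ^ n + (φ ^ n)⁻¹) / 2 := by
  rw [← goldenRatio_add_inv_goldenRatio, T_real_eval_add_inv_div_two goldenRatio_pos,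
    zpow_natCast]

theorem Real.cos_sq_pi_div_ten : cos (π / 10) ^ 2 = √5 * φ / 4 := by
  rw [cos_sq, show 2 * (π / 10) = π / 5 by ring, cos_pi_div_five, goldenRatio]
  have h5 : √5 ^ 2 = 5 := sq_sqrt (by norm_num)
  linear_combination -h5 / 8

theorem Real.cos_sq_three_pi_div_ten : cos (3 * π / 10) ^ 2 = √5 * φ⁻¹ / 4 := by
  rw [show 3 * π / 10 = π / 2 - π / 5 by ring, cos_pi_div_two_sub, sin_sq, cos_pi_div_five,
    inv_goldenRatio, goldenConj]
  have h5 : √5 ^ 2 = 5 := sq_sqrt (by norm_num)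
  linear_combination -3 / 16 * h5

theorem Real.sum_range_five_cos_pow_two_mul {l : ℕ} (hl : l ≠ 0) :
    ∑ i ∈ range 5, cos ((2 * (i : ℝ) + 1) * π / 10) ^ (2 * l) =
      2 * ((cos (π / 10) ^ 2) ^ l + (cos (3 * π / 10) ^ 2) ^ l) := by
  have hmid : cos (π / 2) ^ (2 * l) = 0 := by rw [cos_pi_div_two, zero_pow (by omega)]
  have hrefl (x : ℝ) : cos (π - x) ^ (2 * l) = cos x ^ (2 * l) := by
    rw [cos_pi_sub, (even_two_mul l).neg_pow]
  simp only [sum_range_succ, sum_range_zero]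
  push_cast
  rw [show (2 * 0 + 1) * π / 10 = π / 10 by ring, show (2 * 1 + 1) * π / 10 = 3 * π / 10 by ring,
    show (2 * 2 + 1) * π / 10 = π / 2 by ring, show (2 * 3 + 1) * π / 10 = π - 3 * π / 10 by ring,
    show (2 * 4 + 1) * π / 10 = π - π / 10 by ring, hmid, hrefl, hrefl, pow_mul, pow_mul]
  ring

/-- **Moments of the zeros of `T₅` in terms of Chebyshev polynomials.** For every `l ≥ 1`,
`m_{2l}^{(T)}(5) = (1/5) Σ_{i=1}^5 (cos((2i−1)π/10))^{2l} = (√5)^{l−2}·T_l(√5/2)/2^{2(l−1)}`,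
where `T_l` is the `l`-th Chebyshev polynomial of the first kind. -/
theorem chebyshevT_zero_moments_deg_five (l : ℕ) (hl : 1 ≤ l) :
    (1 / (5 : ℝ)) *
        ∑ i ∈ Finset.range 5,
          (Real.cos ((2 * (i : ℝ) + 1) * Real.pi / 10)) ^ (2 * l) =
      (Real.sqrt 5) ^ ((l : ℤ) - 2) *
        (Polynomial.Chebyshev.T ℝ l).eval (Real.sqrt 5 / 2) / 4 ^ ((l : ℤ) - 1) := by
  rw [sum_range_five_cos_pow_two_mul (by omega), cos_sq_pi_div_ten, cos_sq_three_pi_div_ten,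
    Chebyshev.T_real_eval_sqrt_five_div_two, zpow_sub₀ (by positivity), zpow_sub₀ (by norm_num),
    zpow_natCast, zpow_natCast, zpow_two, zpow_one, mul_self_sqrt (by norm_num)]
  simp only [div_pow, mul_pow, inv_pow]
  field_simp
  ring
end

section
/- Explicit formula for negative power sums (eq. (29), case r ≤ N): let P be monic of degree N over ℂ with σ_N ≠ 0. Then for every r with 1 ≤ r ≤ N, Σ_{i=1}^N x_i^{−r} = Σ over all tuples (n_1,…,n_r) of natural numbers with Σ_{m=1}^r m·n_m = r of (−1)^{r − Σ_m n_m} · r · (Σ_m n_m − 1)!/(n_1!⋯n_r!) · Π_{m=1}^r (σ_{N−m}/σ_N)^{n_m}. -/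
/-!
With `y i = (x i)⁻¹`, the elementary symmetric functions of the `y i` are
`e k = σ (N - k) / σ N`, so the claim is the Girard–Waring formula for the power sum `p r` of the
`y i` in terms of `e 1, …, e r`. Newton's identities determine `p s` from `e s` and the products
`e a * p (s - a)`. The Girard–Waring sum `G s` over the partitions of `s` satisfies the same
recursion: removing a part `m + 1` from a partition `n` with at least two parts turns the terms of
`G s` into those of `e (m + 1) * G (s - m - 1)`, and the coefficients match because
`∑ m, (s - (m + 1)) * n m = s * (∑ m, n m - 1)`. The only partition with a single part is `(s)`,
which produces the term `(-1) ^ (s + 1) * s * e s`.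
-/

open Polynomial Finset

namespace GirardWaring

section Partitions

variable {ι : Type*} [DecidableEq ι] {L : ℕ}

lemma sub_single_add_single {n : ι → ℕ} {m : ι} (hm : n m ≠ 0) :
    n - Pi.single m 1 + Pi.single m 1 = n := by
  ext j
  rcases eq_or_ne j m with rfl | hj
  · simp only [Pi.add_apply, Pi.sub_apply, Pi.single_eq_same]
    omega
  · simp [hj]

lemma eq_single_of_sum_eq_one [Fintype ι] {n : ι → ℕ} (h : ∑ m, n m = 1) :
    ∃ m, n = Pi.single m 1 := by
  obtain ⟨m, hm⟩ := (Finsupp.sum_eq_one_iff (Finsupp.equivFunOnFinite.symm n)).1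
    (by simpa [Finsupp.sum_fintype] using h)
  exact ⟨m, by simpa [Finsupp.single_eq_pi_single] using congrArg DFunLike.coe hm⟩

/-- A partition into parts of size at most `L` is encoded by `n : Fin L → ℕ`, where `n m` is the
multiplicity of the part `m + 1`; its weight is the integer it partitions. -/
def weight (n : Fin L → ℕ) : ℕ := ∑ m : Fin L, ((m : ℕ) + 1) * n m

def partitions (L s : ℕ) : Finset (Fin L → ℕ) :=
  (Fintype.piFinset fun _ : Fin L => range (s + 1)).filter (fun n => weight n = s)

lemma weight_add (n n' : Fin L → ℕ) : weight (n + n') = weight n + weight n' := by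
  simp only [weight, Pi.add_apply, mul_add, sum_add_distrib]

lemma weight_single (m : Fin L) : weight (Pi.single m 1) = (m : ℕ) + 1 := by
  simp [weight, Pi.single_apply]

lemma sum_le_weight (n : Fin L → ℕ) : ∑ m, n m ≤ weight n :=
  sum_le_sum fun m _ => Nat.le_mul_of_pos_left _ m.succ_pos

lemma mem_partitions {s : ℕ} {n : Fin L → ℕ} : n ∈ partitions L s ↔ weight n = s := by
  simp only [partitions, mem_filter, Fintype.mem_piFinset, mem_range, and_iff_right_iff_imp]
  rintro rfl m
  exact Nat.lt_succ_of_le ((single_le_sum (fun _ _ => Nat.zero_le _) (mem_univ m)).trans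
    (sum_le_weight n))

lemma weight_sub_single_add {n : Fin L → ℕ} {m : Fin L} (hm : n m ≠ 0) :
    weight (n - Pi.single m 1) + ((m : ℕ) + 1) = weight n := by
  conv_rhs => rw [← sub_single_add_single hm]
  rw [weight_add, weight_single]

lemma sum_sub_single_add {n : Fin L → ℕ} {m : Fin L} (hm : n m ≠ 0) :
    ∑ j, (n - Pi.single m 1 : Fin L → ℕ) j + 1 = ∑ j, n j := by
  conv_rhs => rw [← sub_single_add_single hm]
  simp only [Pi.add_apply, sum_add_distrib, sum_pi_single', mem_univ, if_true]

lemma two_le_sum {n : Fin L → ℕ} {m₀ : Fin L} (hn : weight n = (m₀ : ℕ) + 1)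
    (hne : n ≠ Pi.single m₀ 1) : 2 ≤ ∑ m, n m := by
  have h0 : ∑ m, n m ≠ 0 := by
    intro h
    have : n = 0 := funext fun m => (sum_eq_zero_iff.1 h) m (mem_univ m)
    simp [this, weight] at hn
  have h1 : ∑ m, n m ≠ 1 := by
    intro h
    obtain ⟨m, rfl⟩ := eq_single_of_sum_eq_one h
    rw [weight_single] at hn
    exact hne (by rw [Fin.ext (Nat.succ_injective hn)])
  omega

lemma lt_weight_of_two_le_sum {n : Fin L → ℕ} (hn : 2 ≤ ∑ m, n m) {m : Fin L} (hm : n m ≠ 0) :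
    (m : ℕ) + 1 < weight n := by
  have := sum_le_weight (n - Pi.single m 1)
  have := weight_sub_single_add hm
  have := sum_sub_single_add hm
  omega

lemma sum_antidiagonal_Ioo_eq_sum_fin {M : Type*} [AddCommMonoid M] {s : ℕ} (hs : s ≤ L)
    (f : ℕ → ℕ → M) :
    ∑ a ∈ antidiagonal s with a.1 ∈ Set.Ioo 0 s, f a.1 a.2 =
      ∑ m ∈ univ.filter (fun m : Fin L => (m : ℕ) + 1 < s),
        f ((m : ℕ) + 1) (s - ((m : ℕ) + 1)) := by
  symm
  refine sum_bij' (fun m _ => ((m : ℕ) + 1, s - (m + 1)))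
    (fun a ha => (⟨a.1 - 1, by simp only [mem_filter, Set.mem_Ioo] at ha; omega⟩ : Fin L))
    ?_ ?_ ?_ ?_ (fun _ _ => rfl)
  · intro m hm
    simp only [mem_filter, HasAntidiagonal.mem_antidiagonal, Set.mem_Ioo] at hm ⊢
    omega
  · rintro ⟨a, b⟩ ha
    simp only [mem_filter, HasAntidiagonal.mem_antidiagonal, Set.mem_Ioo] at ha ⊢
    exact ⟨mem_univ _, by omega⟩
  · intro m _
    simp
  · rintro ⟨a, b⟩ ha
    simp only [mem_filter, HasAntidiagonal.mem_antidiagonal, Set.mem_Ioo] at ha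
    simp only [Prod.mk.injEq]
    omega

end Partitions

section Coefficients

variable {K : Type*} [Field K] {L : ℕ}

def coeff (s : ℕ) (n : Fin L → ℕ) : K :=
  (-1) ^ (s - ∑ m, n m) * s * ((∑ m, n m) - 1).factorial / ∏ m, ((n m).factorial : K)

def prodPow (e : ℕ → K) (n : Fin L → ℕ) : K := ∏ m : Fin L, e ((m : ℕ) + 1) ^ n m

def girardWaring (L : ℕ) (e : ℕ → K) (s : ℕ) : K :=
  ∑ n ∈ partitions L s, coeff s n * prodPow e n

lemma prodPow_add (e : ℕ → K) (n n' : Fin L → ℕ) :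
    prodPow e (n + n') = prodPow e n * prodPow e n' := by
  simp only [prodPow, Pi.add_apply, pow_add, prod_mul_distrib]

lemma prodPow_single (e : ℕ → K) (m : Fin L) : prodPow e (Pi.single m 1) = e ((m : ℕ) + 1) := by
  simp [prodPow, Pi.single_apply]

lemma prod_factorial_add_single (n : Fin L → ℕ) (m : Fin L) :
    ∏ j, (((n + Pi.single m 1 : Fin L → ℕ) j).factorial : K) =
      (n m + 1) * ∏ j, ((n j).factorial : K) := by
  have h : ∀ j, (((n + Pi.single m 1 : Fin L → ℕ) j).factorial : K) =
      (n j).factorial * if j = m then (n m + 1 : K) else 1 := by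
    intro j
    rcases eq_or_ne j m with rfl | hj
    · simp [Nat.factorial_succ, mul_comm]
    · simp [hj]
  rw [prod_congr rfl fun j _ => h j, prod_mul_distrib, prod_ite_eq' univ m, if_pos (mem_univ m),
    mul_comm]

lemma coeff_mul_prodPow_single (e : ℕ → K) {s : ℕ} {m : Fin L} (hm : (m : ℕ) + 1 = s) :
    coeff s (Pi.single m 1) * prodPow e (Pi.single m 1) = (-1) ^ (s + 1) * s * e s := by
  subst hm
  simp [coeff, prodPow_single, pow_succ, Pi.single_apply, apply_ite]

lemma mul_girardWaring_sub_eq_sum (e : ℕ → K) {s : ℕ} {m : Fin L} (hm : (m : ℕ) + 1 ≤ s) :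
    e ((m : ℕ) + 1) * girardWaring L e (s - ((m : ℕ) + 1)) =
      ∑ n ∈ (partitions L s).filter (fun n => n m ≠ 0),
        coeff (s - ((m : ℕ) + 1)) (n - Pi.single m 1) * prodPow e n := by
  rw [girardWaring, mul_sum]
  refine sum_nbij' (· + Pi.single m 1) (· - Pi.single m 1) ?_ ?_ ?_ ?_ ?_
  · intro n hn
    rw [mem_partitions] at hn
    rw [mem_filter, mem_partitions, weight_add, weight_single, hn]
    simp only [Pi.add_apply, Pi.single_eq_same]
    omega
  · intro n hn
    rw [mem_filter, mem_partitions] at hn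
    rw [mem_partitions]
    have := weight_sub_single_add hn.2
    omega
  · intro n _
    exact add_tsub_cancel_right n _
  · intro n hn
    exact sub_single_add_single (mem_filter.1 hn).2
  · intro n _
    rw [add_tsub_cancel_right, prodPow_add, prodPow_single]
    ring

lemma sum_antidiagonal_mul_girardWaring (e : ℕ → K) {s : ℕ} (hsL : s ≤ L) :
    ∑ a ∈ antidiagonal s with a.1 ∈ Set.Ioo 0 s, (-1) ^ a.1 * e a.1 * girardWaring L e a.2 =
      ∑ n ∈ partitions L s,
        (∑ m ∈ univ.filter (fun m : Fin L => (m : ℕ) + 1 < s ∧ n m ≠ 0),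
          (-1) ^ ((m : ℕ) + 1) * coeff (s - ((m : ℕ) + 1)) (n - Pi.single m 1)) * prodPow e n := by
  rw [sum_antidiagonal_Ioo_eq_sum_fin hsL (fun i j => (-1) ^ i * e i * girardWaring L e j)]
  rw [sum_congr rfl fun m hm => by
    rw [mul_assoc, mul_girardWaring_sub_eq_sum e (mem_filter.1 hm).2.le, mul_sum]]
  simp only [sum_mul]
  refine sum_comm' (fun m n => ?_) |>.trans (sum_congr rfl fun n _ => sum_congr rfl fun m _ => ?_)
  · simp only [mem_filter, mem_univ, true_and]
    tauto
  · ring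

variable [CharZero K]

lemma neg_one_pow_mul_coeff_sub_single {n : Fin L → ℕ} {m : Fin L} (hm : n m ≠ 0) :
    (-1) ^ (m : ℕ) * coeff (weight n - ((m : ℕ) + 1)) (n - Pi.single m 1) =
      (-1 : K) ^ (weight n - ∑ j, n j) * ((∑ j, n j) - 2).factorial /
        (∏ j, ((n j).factorial : K)) * (((weight n : K) - ((m : ℕ) + 1)) * n m) := by
  obtain ⟨n', rfl⟩ : ∃ n' : Fin L → ℕ, n = n' + Pi.single m 1 :=
    ⟨_, (sub_single_add_single hm).symm⟩
  have hw : weight (n' + Pi.single m 1) = weight n' + ((m : ℕ) + 1) := by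
    rw [weight_add, weight_single]
  have hT : ∑ j, (n' + Pi.single m 1 : Fin L → ℕ) j = ∑ j, n' j + 1 := by
    simp only [Pi.add_apply, sum_add_distrib, sum_pi_single', mem_univ, if_true]
  have hle := sum_le_weight n'
  have hfac : ∏ j, ((n' j).factorial : K) ≠ 0 :=
    prod_ne_zero_iff.2 fun j _ => Nat.cast_ne_zero.2 (Nat.factorial_ne_zero _)
  rw [hw, hT, prod_factorial_add_single, add_tsub_cancel_right, add_tsub_cancel_right,
    show weight n' + ((m : ℕ) + 1) - (∑ j, n' j + 1) = (weight n' - ∑ j, n' j) + m by omega,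
    show ∑ j, n' j + 1 - 2 = ∑ j, n' j - 1 by omega]
  simp only [coeff, Pi.add_apply, Pi.single_eq_same, pow_add]
  push_cast
  field_simp
  ring

lemma coeff_weight_eq_sum {n : Fin L → ℕ} (hn : 2 ≤ ∑ m, n m) :
    coeff (weight n) n = ∑ m ∈ univ.filter (fun m => n m ≠ 0),
      (-1 : K) ^ (m : ℕ) * coeff (weight n - ((m : ℕ) + 1)) (n - Pi.single m 1) := by
  rw [sum_congr rfl fun m hm => neg_one_pow_mul_coeff_sub_single (mem_filter.1 hm).2,
    sum_filter_of_ne fun m _ h => by contrapose! h; simp [h], ← mul_sum]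
  have hsum : ∑ m : Fin L, ((weight n : K) - ((m : ℕ) + 1)) * n m =
      weight n * ∑ m, n m - weight n := by
    simp only [sub_mul, sum_sub_distrib, ← mul_sum, weight]
    push_cast
    ring
  have hfac : ((∑ m, n m - 1).factorial : K) = (∑ m, n m - 1 : ℕ) * (∑ m, n m - 2).factorial := by
    rw [show ∑ m, n m - 1 = ∑ m, n m - 2 + 1 by omega, Nat.factorial_succ]
    push_cast
    ring
  have hfac0 : ∏ j, ((n j).factorial : K) ≠ 0 :=
    prod_ne_zero_iff.2 fun j _ => Nat.cast_ne_zero.2 (Nat.factorial_ne_zero _)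
  rw [hsum, coeff, hfac, Nat.cast_sub (by omega : 1 ≤ ∑ m, n m)]
  field_simp
  push_cast
  ring

theorem girardWaring_eq_mul_sub_sum (e : ℕ → K) {s : ℕ} (hs : 1 ≤ s) (hsL : s ≤ L) :
    girardWaring L e s = (-1) ^ (s + 1) * s * e s -
      ∑ a ∈ antidiagonal s with a.1 ∈ Set.Ioo 0 s, (-1) ^ a.1 * e a.1 * girardWaring L e a.2 := by
  set m₀ : Fin L := ⟨s - 1, by omega⟩
  have hm₀ : (m₀ : ℕ) + 1 = s := by simp only [m₀]; omega
  have hδ : Pi.single m₀ 1 ∈ partitions L s := mem_partitions.2 (by rw [weight_single, hm₀])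
  set inner : (Fin L → ℕ) → K := fun n =>
    ∑ m ∈ univ.filter (fun m : Fin L => (m : ℕ) + 1 < s ∧ n m ≠ 0),
      (-1) ^ ((m : ℕ) + 1) * coeff (s - ((m : ℕ) + 1)) (n - Pi.single m 1)
  have hsum : ∑ a ∈ antidiagonal s with a.1 ∈ Set.Ioo 0 s,
      (-1) ^ a.1 * e a.1 * girardWaring L e a.2 = ∑ n ∈ partitions L s, inner n * prodPow e n :=
    sum_antidiagonal_mul_girardWaring e hsL
  have hinner_single : inner (Pi.single m₀ 1) = 0 := by
    refine sum_eq_zero fun m hm => absurd (mem_filter.1 hm).2 ?_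
    rintro ⟨hlt, hne⟩
    rcases eq_or_ne m m₀ with rfl | h
    · omega
    · exact hne (Pi.single_eq_of_ne h _)
  have hinner : ∀ n ∈ (partitions L s).erase (Pi.single m₀ 1), inner n = -coeff s n := by
    intro n hn
    obtain ⟨hne, hn⟩ := mem_erase.1 hn
    rw [mem_partitions] at hn
    have hT := two_le_sum (hn.trans hm₀.symm) hne
    have hfilter : univ.filter (fun m : Fin L => (m : ℕ) + 1 < s ∧ n m ≠ 0) =
        univ.filter (fun m => n m ≠ 0) :=
      filter_congr fun m _ => ⟨And.right, fun h => ⟨hn ▸ lt_weight_of_two_le_sum hT h, h⟩⟩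
    simp only [inner, hfilter, pow_succ, mul_neg_one, neg_mul, sum_neg_distrib]
    rw [← hn, coeff_weight_eq_sum hT]
  rw [hsum, girardWaring, ← add_sum_erase _ _ hδ, ← add_sum_erase _ _ hδ, hinner_single,
    coeff_mul_prodPow_single e hm₀, zero_mul, zero_add, sum_congr rfl fun n hn =>
      show inner n * prodPow e n = -(coeff s n * prodPow e n) by rw [hinner n hn, neg_mul],
    sum_neg_distrib, sub_neg_eq_add]

end Coefficients

open MvPolynomial in
theorem psum_eq_girardWaring {K ι : Type*} [Field K] [CharZero K] [Fintype ι] (y : ι → K)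
    {L : ℕ} (e : ℕ → K) (he : ∀ k, 1 ≤ k → k ≤ L → e k = eval y (esymm ι K k))
    {s : ℕ} (hs : 1 ≤ s) (hsL : s ≤ L) : eval y (psum ι K s) = girardWaring L e s := by
  induction s using Nat.strong_induction_on with
  | _ s ih =>
    rw [psum_eq_mul_esymm_sub_sum ι K s hs, girardWaring_eq_mul_sub_sum e hs hsL, he s hs hsL]
    simp only [map_sub, map_mul, map_pow, map_neg, map_one, map_natCast, map_sum]
    refine congrArg _ (sum_congr rfl fun a ha => ?_)
    simp only [mem_filter, HasAntidiagonal.mem_antidiagonal, Set.mem_Ioo] at ha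
    rw [he a.1 (by omega) (by omega), ih a.2 (by omega) (by omega) (by omega)]

lemma sum_powersetCard_prod_inv {K ι : Type*} [Field K] [Fintype ι] [DecidableEq ι] (x : ι → K)
    (hx : ∀ i, x i ≠ 0) {k : ℕ} (hk : k ≤ Fintype.card ι) :
    ∑ t ∈ powersetCard k univ, ∏ i ∈ t, (x i)⁻¹ =
      (∑ t ∈ powersetCard (Fintype.card ι - k) univ, ∏ i ∈ t, x i) / ∏ i, x i := by
  rw [eq_div_iff (prod_ne_zero_iff.2 fun i _ => hx i), sum_mul]
  refine sum_nbij' compl compl ?_ ?_ (fun t _ => compl_compl t) (fun t _ => compl_compl t) ?_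
  · intro t ht
    rw [mem_powersetCard_univ] at ht ⊢
    rw [card_compl, ht]
  · intro t ht
    rw [mem_powersetCard_univ] at ht ⊢
    rw [card_compl, ht]
    omega
  · intro t _
    rw [← prod_mul_prod_compl t x, prod_inv_distrib, ← mul_assoc,
      inv_mul_cancel₀ (prod_ne_zero_iff.2 fun i _ => hx i), one_mul]

end GirardWaring

theorem negative_power_sums_explicit_general (N : ℕ) (x : Fin N → ℂ)
    (σ : ℕ → ℂ)
    (hσ : ∀ k, σ k = ∑ s ∈ Finset.powersetCard k (Finset.univ : Finset (Fin N)), ∏ i ∈ s, x i)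
    (hσN : σ N ≠ 0)
    (r : ℕ) (hr1 : 1 ≤ r) (hrN : r ≤ N) :
    ∑ i, x i ^ (-(r : ℤ)) =
      ∑ n ∈ (Fintype.piFinset fun _ : Fin r => Finset.range (r + 1)).filter
          (fun n => ∑ m : Fin r, ((m : ℕ) + 1) * n m = r),
        (-1 : ℂ) ^ (r - ∑ m : Fin r, n m) * r *
          (Nat.factorial ((∑ m : Fin r, n m) - 1) : ℂ) /
          (∏ m : Fin r, (Nat.factorial (n m) : ℂ)) *
          ∏ m : Fin r, (σ (N - ((m : ℕ) + 1)) / σ N) ^ n m := by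
  have hσN_prod : σ N = ∏ i, x i := by
    have h := powersetCard_self (univ : Finset (Fin N))
    rw [card_univ, Fintype.card_fin] at h
    rw [hσ, h, sum_singleton]
  have hx : ∀ i, x i ≠ 0 := fun i h => hσN (hσN_prod ▸ prod_eq_zero (mem_univ i) h)
  have he : ∀ k, 1 ≤ k → k ≤ r → σ (N - k) / σ N =
      MvPolynomial.eval (fun i => (x i)⁻¹) (MvPolynomial.esymm (Fin N) ℂ k) := by
    intro k _ hk
    have h := GirardWaring.sum_powersetCard_prod_inv x hx (k := k) (by simpa using hk.trans hrN)
    rw [Fintype.card_fin] at h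
    rw [hσ, hσN_prod, ← h]
    simp [MvPolynomial.esymm, map_sum, map_prod]
  have hpsum := GirardWaring.psum_eq_girardWaring (fun i => (x i)⁻¹) _ he hr1 le_rfl
  simp only [MvPolynomial.psum, map_sum, map_pow, MvPolynomial.eval_X] at hpsum
  simp only [zpow_neg, zpow_natCast, ← inv_pow, hpsum]
  rfl

/-- **Explicit formula for negative power sums** (Girard–Waring for `1 ≤ r ≤ N`).
Let `P` be monic of degree `N ≥ 1` over `ℂ` with roots `x 1, …, x N` (with multiplicity),
`σ k` the `k`-th elementary symmetric function of the roots, and `σ_N ≠ 0`.  Then for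
every `r` with `1 ≤ r ≤ N`,
`Σ_i (x i)^{−r} = Σ_{(n_1,…,n_r) : Σ m·n_m = r} (−1)^{r−Σn_m} · r · (Σn_m − 1)!/(n_1!⋯n_r!)
· Π_{m=1}^r (σ_{N−m}/σ_N)^{n_m}`. -/
theorem negative_power_sums_explicit (N : ℕ) (hN : 1 ≤ N) (x : Fin N → ℂ)
    (P : Polynomial ℂ) (hP : P = ∏ i, (X - C (x i)))
    (σ : ℕ → ℂ)
    (hσ : ∀ k, σ k = ∑ s ∈ Finset.powersetCard k (Finset.univ : Finset (Fin N)), ∏ i ∈ s, x i)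
    (hσN : σ N ≠ 0)
    (r : ℕ) (hr1 : 1 ≤ r) (hrN : r ≤ N) :
    ∑ i, x i ^ (-(r : ℤ)) =
      ∑ n ∈ (Fintype.piFinset fun _ : Fin r => Finset.range (r + 1)).filter
          (fun n => ∑ m : Fin r, ((m : ℕ) + 1) * n m = r),
        (-1 : ℂ) ^ (r - ∑ m : Fin r, n m) * r *
          (Nat.factorial ((∑ m : Fin r, n m) - 1) : ℂ) /
          (∏ m : Fin r, (Nat.factorial (n m) : ℂ)) *
          ∏ m : Fin r, (σ (N - ((m : ℕ) + 1)) / σ N) ^ n m :=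
  negative_power_sums_explicit_general N x σ hσ hσN r hr1 hrN
end

section
/- Closed form of the moment generating function for Chebyshev T zeros (Table 1): for every N ≥ 1 and every real z with 0 < z < 1, the series Σ_{r=0}^∞ m_r^{(T)}(N) z^r converges and equals (1/√(1−z²)) · tanh(N · ln(z/(1 − √(1−z²)))). -/
/-!
Substitute `z = 2u / (1 + u²)` with `0 < u < 1`, so that `√(1 - z²) = (1 - u²)/(1 + u²)` and
`z / (1 - √(1 - z²)) = 1/u`. Summing the geometric series, the moment generating function is the
mean of `1 / (1 - z cos θᵢ)` over the nodes `θᵢ = (2i+1)π/(2N)`, and each such term is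
`1/√(1 - z²)` times the Poisson kernel `P_u(θᵢ) = Σₘ εₘ uᵐ cos (m θᵢ)` (`ε₀ = 1`, `εₘ = 2`
otherwise). Averaging over the nodes kills every Fourier mode except `m = 2Nj` (the sum
`Σᵢ cos ((2i+1)β)` telescopes to `sin (2Nβ) / (2 sin β)`, and `β = mπ/(2N)`), while for `m = 2Nj`
all cosines equal `(-1)ʲ`. What is left is a geometric series in `-u^(2N)`, with sum
`(1 - u^(2N)) / (1 + u^(2N)) = tanh (N log (1/u))`.
-/

open Finset Real

theorem hasSum_ite_two_mul_pow_of_norm_lt_one {K : Type*} [NormedField K] {w : K} (hw : ‖w‖ < 1) :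
    HasSum (fun n : ℕ => (if n = 0 then 1 else 2) * w ^ n) ((1 + w) / (1 - w)) := by
  have hw1 : 1 - w ≠ 0 := sub_ne_zero.2 (ne_of_apply_ne norm (by simpa using hw.ne'))
  have h := ((hasSum_geometric_of_norm_lt_one hw).mul_left 2).sub (hasSum_ite_eq 0 (1 : K))
  rw [show (1 + w) / (1 - w) = 2 * (1 - w)⁻¹ - 1 by field_simp; ring]
  refine h.congr_fun fun n => ?_
  split_ifs with hn
  · norm_num [hn]
  · ring

theorem hasSum_poissonKernel {u : ℝ} (hu : |u| < 1) (θ : ℝ) :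
    HasSum (fun n : ℕ => (if n = 0 then 1 else 2) * u ^ n * cos (n * θ))
      ((1 - u ^ 2) / (1 - 2 * u * cos θ + u ^ 2)) := by
  set w : ℂ := u * Complex.exp (θ * Complex.I)
  have hw : ‖w‖ < 1 := by simpa [w, Complex.norm_exp_ofReal_mul_I] using hu
  convert Complex.reCLM.hasSum (hasSum_ite_two_mul_pow_of_norm_lt_one hw) using 1
  · funext n
    have hterm : (if n = 0 then 1 else 2) * w ^ n
        = (((if n = 0 then 1 else 2) * u ^ n : ℝ) : ℂ) * Complex.exp ((n * θ : ℝ) * Complex.I) := by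
      simp only [w, mul_pow, ← Complex.exp_nat_mul]
      split_ifs <;> push_cast <;> ring_nf
    simp only [Complex.reCLM_apply, hterm, Complex.re_ofReal_mul, Complex.exp_ofReal_mul_I_re]
  · have hre : w.re = u * cos θ := by simp [w, Complex.exp_ofReal_mul_I_re]
    have him : w.im = u * sin θ := by simp [w, Complex.exp_ofReal_mul_I_im]
    simp only [Complex.reCLM_apply, Complex.div_re, Complex.normSq_apply, Complex.add_re,
      Complex.sub_re, Complex.add_im, Complex.sub_im, Complex.one_re, Complex.one_im, hre, him]
    rw [← add_div]
    congr 1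
    · linear_combination u ^ 2 * sin_sq_add_cos_sq θ
    · linear_combination -u ^ 2 * sin_sq_add_cos_sq θ

theorem one_sub_two_mul_cos_add_sq_pos {u : ℝ} (hu : |u| < 1) (θ : ℝ) :
    0 < 1 - 2 * u * cos θ + u ^ 2 := by
  have : u * cos θ ≤ |u| := (le_abs_self _).trans <| by
    rw [abs_mul]; exact mul_le_of_le_one_right (abs_nonneg u) (abs_cos_le_one θ)
  nlinarith [sq_abs u, abs_nonneg u]

theorem two_mul_sin_mul_sum_cos_odd_mul (β : ℝ) (n : ℕ) :
    2 * sin β * ∑ i ∈ range n, cos ((2 * i + 1) * β) = sin (2 * n * β) := by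
  have telescope : ∀ i : ℕ, 2 * sin β * cos ((2 * i + 1) * β)
      = sin (2 * (i + 1 : ℕ) * β) - sin (2 * i * β) := by
    intro i
    push_cast
    rw [show 2 * ((i : ℝ) + 1) * β = (2 * i + 1) * β + β by ring,
      show 2 * (i : ℝ) * β = (2 * i + 1) * β - β by ring, sin_add, sin_sub]
    ring
  rw [mul_sum, sum_congr rfl fun i _ => telescope i,
    sum_range_sub (fun i : ℕ => sin (2 * i * β))]
  simp

theorem sum_cos_mul_chebyshevT_nodes_of_not_dvd {N m : ℕ} (hN : 0 < N) (hm : ¬ 2 * N ∣ m) :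
    ∑ i ∈ range N, cos (m * ((2 * i + 1) * π / (2 * N))) = 0 := by
  have hsin : sin (m * π / (2 * N)) ≠ 0 := by
    rw [Ne, sin_eq_zero_iff]
    rintro ⟨n, hn⟩
    rw [eq_div_iff (by positivity)] at hn
    have : (m : ℝ) = n * (2 * N) := mul_right_cancel₀ pi_ne_zero (by linear_combination -hn)
    exact hm (Int.natCast_dvd_natCast.1 ⟨n, by exact_mod_cast this.trans (mul_comm _ _)⟩)
  have key := two_mul_sin_mul_sum_cos_odd_mul (m * π / (2 * N)) N
  rw [show 2 * (N : ℝ) * (m * π / (2 * N)) = m * π by field_simp, sin_nat_mul_pi] at key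
  have hterm : ∀ i : ℕ, (m : ℝ) * ((2 * i + 1) * π / (2 * N)) = (2 * i + 1) * (m * π / (2 * N)) :=
    fun i => by ring
  simp_rw [hterm]
  simpa [hsin] using key

theorem sum_cos_mul_chebyshevT_nodes_two_mul_mul {N : ℕ} (hN : 0 < N) (j : ℕ) :
    ∑ i ∈ range N, cos ((2 * N * j : ℕ) * ((2 * i + 1) * π / (2 * N))) = N * (-1) ^ j := by
  have hterm : ∀ i : ℕ, cos ((2 * N * j : ℕ) * ((2 * i + 1) * π / (2 * N))) = (-1) ^ j := by
    intro i
    rw [show ((2 * N * j : ℕ) : ℝ) * ((2 * i + 1) * π / (2 * N)) = ((2 * i + 1) * j : ℕ) * π by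
      push_cast; field_simp, cos_nat_mul_pi, pow_mul, (odd_two_mul_add_one i).neg_one_pow]
  rw [sum_congr rfl fun i _ => hterm i, sum_const, card_range, nsmul_eq_mul]

theorem sum_poissonKernel_chebyshevT_nodes {N : ℕ} (hN : 0 < N) {u : ℝ} (hu : |u| < 1) :
    ∑ i ∈ range N, (1 - u ^ 2) / (1 - 2 * u * cos ((2 * i + 1) * π / (2 * N)) + u ^ 2) =
      N * ((1 - u ^ (2 * N)) / (1 + u ^ (2 * N))) := by
  set f : ℕ → ℝ := fun m => (if m = 0 then 1 else 2) * u ^ m *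
    ∑ i ∈ range N, cos (m * ((2 * i + 1) * π / (2 * N)))
  have hf : HasSum f (∑ i ∈ range N,
      (1 - u ^ 2) / (1 - 2 * u * cos ((2 * i + 1) * π / (2 * N)) + u ^ 2)) := by
    simpa only [f, mul_sum] using hasSum_sum fun i _ => hasSum_poissonKernel hu _
  have hmul : Function.Injective (fun j : ℕ => 2 * N * j) :=
    fun a b h => Nat.eq_of_mul_eq_mul_left (by positivity) h
  have hzero : ∀ m ∉ Set.range (fun j : ℕ => 2 * N * j), f m = 0 := fun m hm => by
    simp [f, sum_cos_mul_chebyshevT_nodes_of_not_dvd hN fun ⟨j, hj⟩ => hm ⟨j, hj.symm⟩]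
  have hv : ‖-u ^ (2 * N)‖ < 1 := by
    simpa [abs_pow] using pow_lt_one₀ (abs_nonneg u) hu (by positivity)
  have hsub : HasSum (f ∘ fun j : ℕ => 2 * N * j)
      (N * ((1 + -u ^ (2 * N)) / (1 - -u ^ (2 * N)))) := by
    refine ((hasSum_ite_two_mul_pow_of_norm_lt_one hv).mul_left (N : ℝ)).congr_fun fun j => ?_
    have hj0 : 2 * N * j = 0 ↔ j = 0 := by simp [hN.ne']
    simp only [Function.comp_apply, f, sum_cos_mul_chebyshevT_nodes_two_mul_mul hN, hj0, pow_mul]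
    ring
  rw [hf.unique ((hmul.hasSum_iff hzero).1 hsub)]
  ring

theorem hasSum_sum_pow_mul_pow {ι K : Type*} [NormedField K] (s : Finset ι) (c : ι → K) {z : K}
    (h : ∀ i ∈ s, ‖c i * z‖ < 1) :
    HasSum (fun r : ℕ => (∑ i ∈ s, c i ^ r) * z ^ r) (∑ i ∈ s, (1 - c i * z)⁻¹) := by
  simpa only [sum_mul, mul_pow] using hasSum_sum fun i hi => hasSum_geometric_of_norm_lt_one (h i hi)

theorem hasSum_chebyshevT_moments_mul_pow {N : ℕ} (hN : 0 < N) {u : ℝ} (hu : |u| < 1) :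
    HasSum (fun r : ℕ =>
        ((1 / (N : ℝ)) * ∑ i ∈ range N, cos ((2 * (i : ℝ) + 1) * π / (2 * N)) ^ r) *
          (2 * u / (1 + u ^ 2)) ^ r)
      ((1 + u ^ 2) / (1 - u ^ 2) * ((1 - u ^ (2 * N)) / (1 + u ^ (2 * N)))) := by
  have hu2 : 0 < 1 - u ^ 2 := by nlinarith [sq_abs u, abs_nonneg u]
  have hcz : ∀ θ, ‖cos θ * (2 * u / (1 + u ^ 2))‖ < 1 := fun θ => by
    rw [norm_mul, norm_eq_abs, norm_eq_abs, abs_div, abs_mul, abs_two,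
      abs_of_pos (by positivity : (0 : ℝ) < 1 + u ^ 2)]
    have : 2 * |u| / (1 + u ^ 2) < 1 := by
      rw [div_lt_one (by positivity)]
      nlinarith [sq_abs u, abs_nonneg u]
    exact (mul_le_of_le_one_left (by positivity) (abs_cos_le_one θ)).trans_lt this
  have hnode : ∀ θ, (1 - cos θ * (2 * u / (1 + u ^ 2)))⁻¹
      = (1 + u ^ 2) / (1 - u ^ 2) * ((1 - u ^ 2) / (1 - 2 * u * cos θ + u ^ 2)) := fun θ => by
    have := one_sub_two_mul_cos_add_sq_pos hu θ
    field_simp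
    ring
  have hmgf := (hasSum_sum_pow_mul_pow (range N) (fun i : ℕ => cos ((2 * i + 1) * π / (2 * N)))
    fun i _ => hcz _).mul_left (1 / (N : ℝ))
  rw [sum_congr rfl fun i _ => hnode _, ← mul_sum, sum_poissonKernel_chebyshevT_nodes hN hu,
    mul_left_comm _ (N : ℝ), ← mul_assoc, one_div_mul_cancel (by positivity), one_mul] at hmgf
  exact hmgf.congr_fun fun r => by ring

theorem exists_two_mul_div_one_add_sq_eq {z : ℝ} (hz0 : 0 < z) (hz1 : z < 1) :
    ∃ u, 0 < u ∧ u < 1 ∧ 2 * u / (1 + u ^ 2) = z := by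
  have hz2 : 0 < 1 - z ^ 2 := by nlinarith
  have hs := sq_sqrt hz2.le
  refine ⟨(1 - √(1 - z ^ 2)) / z, div_pos (by nlinarith [sqrt_pos.2 hz2]) hz0, ?_, ?_⟩
  · rw [div_lt_one hz0]; nlinarith [sqrt_pos.2 hz2]
  · field_simp
    linear_combination -hs

theorem sqrt_one_sub_two_mul_div_one_add_sq_sq {u : ℝ} (hu : |u| ≤ 1) :
    √(1 - (2 * u / (1 + u ^ 2)) ^ 2) = (1 - u ^ 2) / (1 + u ^ 2) := by
  have hu2 : 0 ≤ 1 - u ^ 2 := by nlinarith [sq_abs u, abs_nonneg u]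
  rw [← sqrt_sq (div_nonneg hu2 (by positivity))]
  congr 1
  field_simp
  ring

theorem tanh_log {x : ℝ} (hx : 0 < x) : tanh (log x) = (x ^ 2 - 1) / (x ^ 2 + 1) := by
  rw [tanh_eq, exp_neg, exp_log hx]
  field_simp

/-- **Closed form of the moment generating function for Chebyshev `T` zeros.**
For every `N ≥ 1` and every real `z` with `0 < z < 1`, the series
`Σ_{r=0}^∞ m_r^{(T)}(N) z^r`, with `m_r^{(T)}(N) = (1/N) Σ_{i=1}^N (cos((2i−1)π/(2N)))^r`,
converges and its sum is `(1/√(1−z²)) · tanh(N · ln(z/(1 − √(1−z²))))`. -/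
theorem chebyshevT_moment_generating_function (N : ℕ) (hN : 1 ≤ N)
    (z : ℝ) (hz0 : 0 < z) (hz1 : z < 1) :
    HasSum
      (fun r : ℕ =>
        ((1 / (N : ℝ)) *
            ∑ i ∈ Finset.range N,
              (Real.cos ((2 * (i : ℝ) + 1) * Real.pi / (2 * N))) ^ r) * z ^ r)
      ((1 / Real.sqrt (1 - z ^ 2)) *
        Real.tanh (N * Real.log (z / (1 - Real.sqrt (1 - z ^ 2))))) := by
  obtain ⟨u, hu0, hu1, rfl⟩ := exists_two_mul_div_one_add_sq_eq hz0 hz1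
  have hu : |u| < 1 := by rwa [abs_of_pos hu0]
  have hlog : 2 * u / (1 + u ^ 2) / (1 - (1 - u ^ 2) / (1 + u ^ 2)) = u⁻¹ := by
    field_simp
    ring
  have hval : 1 / ((1 - u ^ 2) / (1 + u ^ 2)) * (((u⁻¹ ^ N) ^ 2 - 1) / ((u⁻¹ ^ N) ^ 2 + 1))
      = (1 + u ^ 2) / (1 - u ^ 2) * ((1 - u ^ (2 * N)) / (1 + u ^ (2 * N))) := by
    rw [inv_pow, inv_pow, ← pow_mul, mul_comm N]
    field_simp
  rw [sqrt_one_sub_two_mul_div_one_add_sq_sq hu.le, hlog, ← log_pow, tanh_log (by positivity),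
    hval]
  exact hasSum_chebyshevT_moments_mul_pow hN hu
end

section
/- Closed form of the moment generating function for Chebyshev U zeros (Table 1, with the hyperbolic function corrected to coth): for every N ≥ 1 and every real z with 0 < z < 1, the series Σ_{r=0}^∞ m_r^{(U)}(N) z^r converges and equals (1/(N√(1−z²))) · [ (N+1) · coth((N+1) · ln(z/(1 − √(1−z²)))) − 1/√(1−z²) ]. -/
/-!
Summing the geometric series termwise, the generating function is
`(1/N) Σₖ (1 - z cos θₖ)⁻¹` with `θₖ = (k+1)π/(N+1)`. The logarithm in the statement is
`t = arcosh (1/z)`, so `z = 1 / cosh t`, `√(1 - z²) = tanh t`, and the sum becomes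
`cosh t · Σₖ (cosh t - cos θₖ)⁻¹`. Together with `0`, `π` and their reflections `2π - θₖ`, the
`θₖ` are the arguments of the `n`-th roots of unity for `n = 2(N+1)`; over all of these, the sum of
`(cosh t - cos θ)⁻¹` is read off from the real part of the logarithmic derivative of `X ^ n - 1`
at `eᵗ`, which gives `n coth (n t / 2) / sinh t`.
-/

open Finset Real

open Polynomial in
theorem IsPrimitiveRoot.sum_inv_sub_pow {K : Type*} [Field K] {n : ℕ} {ζ : K}
    (hζ : IsPrimitiveRoot ζ n) {x : K} (hx : x ^ n ≠ 1) :
    ∑ k ∈ range n, (x - ζ ^ k)⁻¹ = n * x ^ (n - 1) / (x ^ n - 1) := by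
  have hroots : (X ^ n - C 1 : K[X]).roots = (Multiset.range n).map (ζ ^ ·) := by
    simpa [nthRoots] using hζ.nthRoots_eq (one_pow n)
  have hlogDeriv := (X_pow_sub_one_splits hζ).eval_derivative_div_eval_of_ne_zero (x := x)
    (by simpa [sub_eq_zero] using hx)
  rw [hroots] at hlogDeriv
  simpa [Finset.sum_eq_multiset_sum, derivative_X_pow] using hlogDeriv.symm

theorem Complex.normSq_ofReal_exp_sub_exp_mul_I (t θ : ℝ) :
    normSq (Real.exp t - exp (θ * I)) = 2 * Real.exp t * (Real.cosh t - Real.cos θ) := by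
  rw [normSq_apply, Real.cosh_eq, Real.exp_neg]
  simp only [sub_re, sub_im, ofReal_re, ofReal_im, exp_ofReal_mul_I_re, exp_ofReal_mul_I_im]
  field_simp
  linear_combination Real.sin_sq_add_cos_sq θ

theorem Real.cosh_div_sinh_eq_exp (u : ℝ) :
    cosh u / sinh u = (exp (2 * u) + 1) / (exp (2 * u) - 1) := by
  rw [cosh_eq, sinh_eq, ← mul_div_mul_left _ _ (exp_ne_zero u), two_mul, exp_add, exp_neg]
  field_simp

theorem Real.two_mul_exp_mul_re_inv_exp_sub_exp_mul_I {t : ℝ} (ht : t ≠ 0) (θ : ℝ) :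
    2 * exp t * ((exp t - Complex.exp (θ * Complex.I) : ℂ)⁻¹).re =
      1 + sinh t * (cosh t - cos θ)⁻¹ := by
  have hpos : 0 < cosh t - cos θ := by
    linarith [one_lt_cosh.mpr ht, cos_le_one θ]
  rw [Complex.inv_re, Complex.normSq_ofReal_exp_sub_exp_mul_I, Complex.sub_re,
    Complex.ofReal_re, Complex.exp_ofReal_mul_I_re]
  field_simp
  linear_combination -cosh_add_sinh t

theorem Real.sinh_mul_sum_inv_cosh_sub_cos (n : ℕ) (hn : n ≠ 0) {t : ℝ} (ht : t ≠ 0) :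
    sinh t * ∑ k ∈ range n, (cosh t - cos (2 * π * k / n))⁻¹ =
      n * (cosh (n * t / 2) / sinh (n * t / 2)) := by
  have hE : exp (n * t) - 1 ≠ 0 := by
    rw [sub_ne_zero, Ne, exp_eq_one_iff]
    exact mul_ne_zero (Nat.cast_ne_zero.mpr hn) ht
  have hlogDeriv := (Complex.isPrimitiveRoot_exp n hn).sum_inv_sub_pow (x := exp t)
    (by rw [← Complex.ofReal_pow, ← exp_nat_mul]; exact_mod_cast sub_ne_zero.mp hE)
  have hpow (k : ℕ) : Complex.exp (2 * π * Complex.I / n) ^ k =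
      Complex.exp ((2 * π * k / n : ℝ) * Complex.I) := by
    rw [← Complex.exp_nat_mul]
    push_cast
    ring_nf
  have hrhs : 2 * exp t * ((n * (exp t : ℂ) ^ (n - 1) / ((exp t : ℂ) ^ n - 1)).re) =
      2 * n * exp (n * t) / (exp (n * t) - 1) := by
    norm_cast
    push_cast
    rw [exp_nat_mul, ← mul_pow_sub_one hn (exp t)]
    ring
  have hreal : ∑ k ∈ range n, (1 + sinh t * (cosh t - cos (2 * π * k / n))⁻¹) =
      2 * n * exp (n * t) / (exp (n * t) - 1) := by
    rw [← hrhs, ← hlogDeriv, Complex.re_sum, mul_sum]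
    simp only [hpow, two_mul_exp_mul_re_inv_exp_sub_exp_mul_I ht]
  rw [sum_add_distrib, ← mul_sum, sum_const, card_range, nsmul_one, eq_div_iff hE] at hreal
  rw [cosh_div_sinh_eq_exp, show 2 * (n * t / 2) = n * t by ring, mul_div_assoc', eq_div_iff hE]
  linear_combination hreal

theorem Real.sum_range_two_mul_cos_mul_pi_div {M : Type*} [AddCommMonoid M] (N : ℕ) (F : ℝ → M) :
    ∑ k ∈ range (2 * (N + 1)), F (cos (k * π / (N + 1))) =
      F 1 + F (-1) + 2 • ∑ k ∈ range N, F (cos ((k + 1) * π / (N + 1))) := by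
  have hN : (N + 1 : ℝ) ≠ 0 := by positivity
  have hreflect : ∑ k ∈ range N, F (cos (↑(N + 2 + k) * π / (N + 1))) =
      ∑ k ∈ range N, F (cos ((k + 1) * π / (N + 1))) := by
    rw [← sum_range_reflect]
    refine sum_congr rfl fun k hk ↦ ?_
    obtain ⟨j, hj⟩ : ∃ j, N = k + 1 + j := ⟨N - 1 - k, by grind⟩
    have hjk : N - 1 - k = j := by omega
    rw [hjk, ← cos_two_pi_sub]
    congr 2
    subst hj
    field_simp
    push_cast
    ring
  rw [show 2 * (N + 1) = N + 2 + N by ring, sum_range_add, hreflect, sum_range_succ,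
    sum_range_succ']
  have hpi : ((N + 1 : ℕ) : ℝ) * π / (N + 1) = π := by push_cast; field_simp
  rw [hpi, cos_pi]
  simp only [Nat.cast_zero, zero_mul, zero_div, cos_zero, Nat.cast_succ, two_nsmul]
  abel

theorem Real.sum_inv_cosh_sub_cos_mul_pi_div (N : ℕ) {t : ℝ} (ht : t ≠ 0) :
    ∑ k ∈ range N, (cosh t - cos ((k + 1) * π / (N + 1)))⁻¹ =
      ((N + 1) * (cosh ((N + 1) * t) / sinh ((N + 1) * t)) - cosh t / sinh t) / sinh t := by
  have hsinh : sinh t ≠ 0 := sinh_ne_zero.mpr ht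
  have hcosh : 1 < cosh t := one_lt_cosh.mpr ht
  have hfull := sinh_mul_sum_inv_cosh_sub_cos (2 * (N + 1)) (by positivity) ht
  have hangle (k : ℕ) : 2 * π * k / ((2 * (N + 1) : ℕ) : ℝ) = k * π / (N + 1) := by
    push_cast
    field_simp
  simp only [hangle, sum_range_two_mul_cos_mul_pi_div N (fun c ↦ (cosh t - c)⁻¹),
    sub_neg_eq_add, nsmul_eq_mul] at hfull
  have hends : sinh t * ((cosh t - 1)⁻¹ + (cosh t + 1)⁻¹) = 2 * (cosh t / sinh t) := by
    have h1 : cosh t - 1 ≠ 0 := by linarith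
    have h2 : cosh t + 1 ≠ 0 := by linarith
    field_simp
    linear_combination -2 * cosh t * cosh_sq t
  rw [mul_add, hends] at hfull
  push_cast at hfull
  rw [show (2 * (N + 1) : ℝ) * t / 2 = (N + 1) * t by ring] at hfull
  rw [eq_div_iff hsinh]
  linear_combination hfull / 2

theorem Real.sqrt_one_sub_sq_lt_one {z : ℝ} (hz : z ≠ 0) : √(1 - z ^ 2) < 1 := by
  rw [sqrt_lt' one_pos]
  nlinarith [sq_pos_of_ne_zero hz]

theorem Real.cosh_log_div_one_sub_sqrt_one_sub_sq {z : ℝ} (hz0 : 0 < z) (hz1 : z ≤ 1) :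
    cosh (log (z / (1 - √(1 - z ^ 2)))) = z⁻¹ := by
  have hpos : 0 < 1 - √(1 - z ^ 2) := sub_pos.mpr (sqrt_one_sub_sq_lt_one hz0.ne')
  have hsq : √(1 - z ^ 2) ^ 2 = 1 - z ^ 2 := sq_sqrt (by nlinarith)
  rw [cosh_eq, exp_neg, exp_log (div_pos hz0 hpos)]
  field_simp
  linear_combination hsq

theorem Real.sinh_log_div_one_sub_sqrt_one_sub_sq {z : ℝ} (hz0 : 0 < z) (hz1 : z ≤ 1) :
    sinh (log (z / (1 - √(1 - z ^ 2)))) = √(1 - z ^ 2) / z := by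
  have hpos : 0 < 1 - √(1 - z ^ 2) := sub_pos.mpr (sqrt_one_sub_sq_lt_one hz0.ne')
  have hsq : √(1 - z ^ 2) ^ 2 = 1 - z ^ 2 := sq_sqrt (by nlinarith)
  rw [sinh_eq, exp_neg, exp_log (div_pos hz0 hpos)]
  field_simp
  linear_combination hsq

theorem Real.sum_inv_one_sub_cos_mul_pi_div_mul (N : ℕ) {z : ℝ} (hz0 : 0 < z) (hz1 : z < 1) :
    ∑ k ∈ range N, (1 - cos ((k + 1) * π / (N + 1)) * z)⁻¹ =
      1 / √(1 - z ^ 2) * ((N + 1) *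
        (cosh ((N + 1) * log (z / (1 - √(1 - z ^ 2)))) /
          sinh ((N + 1) * log (z / (1 - √(1 - z ^ 2))))) - 1 / √(1 - z ^ 2)) := by
  have hcosh := cosh_log_div_one_sub_sqrt_one_sub_sq hz0 hz1.le
  have hsinh := sinh_log_div_one_sub_sqrt_one_sub_sq hz0 hz1.le
  set t := log (z / (1 - √(1 - z ^ 2)))
  have ht : t ≠ 0 := one_lt_cosh.mp (hcosh ▸ one_lt_inv₀ hz0 |>.mpr hz1)
  have hs : 0 < √(1 - z ^ 2) := sqrt_pos.mpr (by nlinarith)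
  have hterm (c : ℝ) : (1 - c * z)⁻¹ = cosh t * (cosh t - c)⁻¹ := by
    rw [hcosh, ← mul_inv, mul_sub, mul_inv_cancel₀ hz0.ne', mul_comm z c]
  rw [sum_congr rfl fun k _ ↦ hterm _, ← mul_sum, sum_inv_cosh_sub_cos_mul_pi_div N ht, hcosh,
    hsinh]
  field_simp

theorem chebyshevU_moment_generating_function_general (N : ℕ)
    (z : ℝ) (hz0 : 0 < z) (hz1 : z < 1) :
    HasSum
      (fun r : ℕ =>
        ((1 / (N : ℝ)) *
            ∑ k ∈ Finset.range N,
              (Real.cos (((k : ℝ) + 1) * Real.pi / (N + 1))) ^ r) * z ^ r)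
      ((1 / (N * Real.sqrt (1 - z ^ 2))) *
        ((N + 1) *
            (Real.cosh ((N + 1) * Real.log (z / (1 - Real.sqrt (1 - z ^ 2)))) /
              Real.sinh ((N + 1) * Real.log (z / (1 - Real.sqrt (1 - z ^ 2))))) -
          1 / Real.sqrt (1 - z ^ 2))) := by
  have hgeom (θ : ℝ) : HasSum (fun r ↦ (cos θ * z) ^ r) (1 - cos θ * z)⁻¹ := by
    refine hasSum_geometric_of_abs_lt_one ?_
    rw [abs_mul, abs_of_pos hz0]
    nlinarith [abs_cos_le_one θ]
  have hsum := (hasSum_sum fun (k : ℕ) (_ : k ∈ range N) ↦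
    hgeom ((k + 1) * π / (N + 1))).mul_left (1 / (N : ℝ))
  rw [sum_inv_one_sub_cos_mul_pi_div_mul N hz0 hz1, ← mul_assoc, one_div_mul_one_div] at hsum
  simpa only [mul_pow, sum_mul, mul_assoc] using hsum

/-- **Closed form of the moment generating function for Chebyshev `U` zeros**
(with the hyperbolic function corrected to `coth`).  For every `N ≥ 1` and every real
`z` with `0 < z < 1`, the series `Σ_{r=0}^∞ m_r^{(U)}(N) z^r`, with
`m_r^{(U)}(N) = (1/N) Σ_{k=1}^N (cos(kπ/(N+1)))^r`, converges and its sum is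
`(1/(N√(1−z²))) · [(N+1)·coth((N+1)·ln(z/(1−√(1−z²)))) − 1/√(1−z²)]`. -/
theorem chebyshevU_moment_generating_function (N : ℕ) (hN : 1 ≤ N)
    (z : ℝ) (hz0 : 0 < z) (hz1 : z < 1) :
    HasSum
      (fun r : ℕ =>
        ((1 / (N : ℝ)) *
            ∑ k ∈ Finset.range N,
              (Real.cos (((k : ℝ) + 1) * Real.pi / (N + 1))) ^ r) * z ^ r)
      ((1 / (N * Real.sqrt (1 - z ^ 2))) *
        ((N + 1) *
            (Real.cosh ((N + 1) * Real.log (z / (1 - Real.sqrt (1 - z ^ 2)))) /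
              Real.sinh ((N + 1) * Real.log (z / (1 - Real.sqrt (1 - z ^ 2))))) -
          1 / Real.sqrt (1 - z ^ 2))) :=
  chebyshevU_moment_generating_function_general N z hz0 hz1
end

section
/- Riccati equation for the Chebyshev U moment generating function (Table 2): for every N ≥ 1, the function G(z) := Σ_{r=0}^∞ m_r^{(U)}(N) z^r is well defined and differentiable on the real interval (−1, 1), and for every z ∈ (−1, 1) it satisfies ((1 − z²) z / N) · G′(z) = ((2 + z²)/N) · G(z) + (1 − z²) · G(z)² − (N + 2)/N. -/
/-!
Let `x_k` be the zeros of `U_N`. Summing geometric series, `N G(z) = S(z) := ∑ₖ 1 / (1 - x_k z)`.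
Since `U_N` splits, its log-derivative `y = U_N' / U_N = ∑ₖ 1 / (x - x_k)` satisfies
`U_N'' / U_N = y² + y'`, so the Chebyshev equation `(1 - x²) U_N'' = 3x U_N' - N(N+2) U_N` becomes a
Riccati equation for `y`. Since `y(1/z) = z S(z)`, substituting `x = 1/z` turns it into the
Riccati equation for `S`, and dividing by `N²` gives the one for `G`.
-/

open Finset Real Polynomial Topology

section LogDeriv

variable {𝕜 : Type*} [NontriviallyNormedField 𝕜]

theorem hasDerivAt_multiset_sum_one_div_sub (s : Multiset 𝕜) {x : 𝕜} (hx : ∀ r ∈ s, x ≠ r) :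
    HasDerivAt (fun w ↦ (s.map fun r ↦ 1 / (w - r)).sum)
      (-(s.map fun r ↦ 1 / (x - r) ^ 2).sum) x := by
  induction s using Multiset.induction_on with
  | empty => simpa using hasDerivAt_const x (0 : 𝕜)
  | cons a s ih =>
    simp only [Multiset.map_cons, Multiset.sum_cons, neg_add]
    have ha : HasDerivAt (fun w ↦ 1 / (w - a)) (-(1 / (x - a) ^ 2)) x := by
      simpa [one_div, neg_div] using ((hasDerivAt_id x).sub_const a).fun_inv
        (sub_ne_zero.2 (hx a (Multiset.mem_cons_self a s)))
    exact ha.add (ih fun r hr ↦ hx r (Multiset.mem_cons_of_mem hr))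

theorem Polynomial.Splits.eval_derivative_derivative_eq_eval_mul_sum {f : 𝕜[X]} (hf : f.Splits)
    {x : 𝕜} (hx : f.eval x ≠ 0) :
    f.derivative.derivative.eval x = f.eval x *
      ((f.roots.map fun r ↦ 1 / (x - r)).sum ^ 2 - (f.roots.map fun r ↦ 1 / (x - r) ^ 2).sum) := by
  have hroots : ∀ r ∈ f.roots, x ≠ r := fun r hr hxr ↦ hx (hxr ▸ (mem_roots'.1 hr).2)
  have hlog : (fun w ↦ f.derivative.eval w) =ᶠ[𝓝 x]
      fun w ↦ f.eval w * (f.roots.map fun r ↦ 1 / (w - r)).sum := by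
    filter_upwards [f.continuous.continuousAt.eventually_ne hx] with w hw
    exact hf.eval_derivative_eq_eval_mul_sum hw
  have hprod := (f.hasDerivAt x).mul (hasDerivAt_multiset_sum_one_div_sub f.roots hroots)
  rw [(f.derivative.hasDerivAt x).unique (hprod.congr_of_eventuallyEq hlog),
    hf.eval_derivative_eq_eval_mul_sum hx]
  ring

end LogDeriv

section GeneratingFunction

theorem abs_mul_lt_one_of_abs_le_one {a z : ℝ} (ha : |a| ≤ 1) (hz : |z| < 1) : |a * z| < 1 := by
  rw [abs_mul]
  exact mul_lt_one_of_nonneg_of_lt_one_right ha (abs_nonneg z) hz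

theorem one_sub_mul_ne_zero_of_abs_le_one {a z : ℝ} (ha : |a| ≤ 1) (hz : |z| < 1) :
    1 - a * z ≠ 0 :=
  sub_ne_zero.2 (ne_of_gt ((le_abs_self _).trans_lt (abs_mul_lt_one_of_abs_le_one ha hz)))

variable {ι : Type*} (s : Finset ι) {a : ι → ℝ}

theorem hasSum_sum_pow_mul_pow_s14 (ha : ∀ i ∈ s, |a i| ≤ 1) {w : ℝ} (hw : |w| < 1) :
    HasSum (fun r : ℕ ↦ (∑ i ∈ s, a i ^ r) * w ^ r) (∑ i ∈ s, (1 - a i * w)⁻¹) := by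
  have hgeom : ∀ i ∈ s, HasSum (fun r : ℕ ↦ (a i * w) ^ r) (1 - a i * w)⁻¹ := fun i hi ↦
    hasSum_geometric_of_norm_lt_one (abs_mul_lt_one_of_abs_le_one (ha i hi) hw)
  simpa only [sum_mul, mul_pow] using hasSum_sum hgeom

theorem hasDerivAt_sum_inv_one_sub_mul {z : ℝ} (hz : ∀ i ∈ s, 1 - a i * z ≠ 0) :
    HasDerivAt (fun w ↦ ∑ i ∈ s, (1 - a i * w)⁻¹) (∑ i ∈ s, a i * ((1 - a i * z) ^ 2)⁻¹) z := by
  refine HasDerivAt.fun_sum fun i hi ↦ ?_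
  have hlin : HasDerivAt (fun w ↦ 1 - a i * w) (-a i) z := by
    simpa using ((hasDerivAt_id z).const_mul (a i)).const_sub 1
  simpa [div_eq_mul_inv] using hlin.fun_inv (hz i hi)

end GeneratingFunction

namespace Polynomial.Chebyshev

theorem sum_map_roots_U_real (n : ℕ) (g : ℝ → ℝ) :
    ((U ℝ n).roots.map g).sum = ∑ k ∈ range n, g (cos ((k + 1) * π / (n + 1))) := by
  rw [roots_U_real, image_val, range_val, (roots_U_real_nodup n).dedup, Multiset.map_map]
  rfl

theorem splits_U_real (n : ℕ) : (U ℝ n).Splits := by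
  rw [splits_iff_card_roots, roots_U_real, image_val, range_val, (roots_U_real_nodup n).dedup,
    natDegree_U_natCast]
  simp

theorem eval_U_real_ne_zero_of_one_lt_abs {n : ℕ} {x : ℝ} (hx : 1 < |x|) :
    (U ℝ n).eval x ≠ 0 := by
  intro h
  have hmem : x ∈ (U ℝ n).roots := (mem_roots (U_ne_zero ℝ n (by omega))).2 h
  rw [roots_U_real, Finset.mem_val, Finset.mem_image] at hmem
  obtain ⟨k, -, rfl⟩ := hmem
  exact (abs_cos_le_one _).not_gt hx

theorem riccati_sum_one_div_sub_roots_U (n : ℕ) {x : ℝ} (hx : (U ℝ n).eval x ≠ 0) :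
    (1 - x ^ 2) * ((∑ k ∈ range n, 1 / (x - cos ((k + 1) * π / (n + 1)))) ^ 2 -
        ∑ k ∈ range n, 1 / (x - cos ((k + 1) * π / (n + 1))) ^ 2) =
      3 * x * ∑ k ∈ range n, 1 / (x - cos ((k + 1) * π / (n + 1))) - n * (n + 2) := by
  have hode :=
    congrArg (eval x) (one_sub_X_sq_mul_derivative_derivative_U_eq_poly_in_U (R := ℝ) n)
  simp only [Function.iterate_succ, Function.iterate_zero, Function.comp_apply, id, eval_mul,
    eval_sub, eval_one, eval_pow, eval_X, eval_ofNat, eval_add, eval_intCast] at hode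
  rw [(splits_U_real n).eval_derivative_derivative_eq_eval_mul_sum hx,
    (splits_U_real n).eval_derivative_eq_eval_mul_sum hx] at hode
  simp only [sum_map_roots_U_real] at hode
  refine mul_left_cancel₀ hx ?_
  push_cast at hode
  linear_combination hode

theorem riccati_sum_inv_one_sub_mul_roots_U (n : ℕ) {z : ℝ} (hz : |z| < 1) :
    (1 - z ^ 2) * z * ∑ k ∈ range n, cos ((k + 1) * π / (n + 1)) *
        ((1 - cos ((k + 1) * π / (n + 1)) * z) ^ 2)⁻¹ =
      (2 + z ^ 2) * ∑ k ∈ range n, (1 - cos ((k + 1) * π / (n + 1)) * z)⁻¹ +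
        (1 - z ^ 2) * (∑ k ∈ range n, (1 - cos ((k + 1) * π / (n + 1)) * z)⁻¹) ^ 2 -
        n * (n + 2) := by
  obtain ⟨c, hc⟩ : ∃ c : ℕ → ℝ, ∀ k : ℕ, cos ((k + 1) * π / (n + 1)) = c k := ⟨_, fun _ ↦ rfl⟩
  simp only [hc]
  rcases eq_or_ne z 0 with rfl | hz0
  · simp only [ne_eq, OfNat.ofNat_ne_zero, not_false_eq_true, zero_pow, sub_zero, mul_zero,
      one_pow, inv_one, mul_one, zero_mul, add_zero, sum_const, card_range, nsmul_eq_mul, one_mul]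
    ring
  have hd : ∀ k, 1 - c k * z ≠ 0 := fun k ↦
    one_sub_mul_ne_zero_of_abs_le_one (hc k ▸ abs_cos_le_one _) hz
  have hU : (U ℝ n).eval z⁻¹ ≠ 0 :=
    eval_U_real_ne_zero_of_one_lt_abs (by rw [abs_inv]; exact one_lt_inv₀ (abs_pos.2 hz0) |>.2 hz)
  have hpole : ∀ k, 1 / (z⁻¹ - c k) = z * (1 - c k * z)⁻¹ := fun k ↦ by
    field_simp [hd k]
  have hpole_sq : ∀ k, 1 / (z⁻¹ - c k) ^ 2 = z ^ 2 * ((1 - c k * z) ^ 2)⁻¹ := fun k ↦ by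
    rw [← one_div_pow, hpole, mul_pow, inv_pow]
  have hderiv : ∀ k, z * (c k * ((1 - c k * z) ^ 2)⁻¹) =
      ((1 - c k * z) ^ 2)⁻¹ - (1 - c k * z)⁻¹ := fun k ↦ by
    field_simp [hd k]
    ring
  have h := riccati_sum_one_div_sub_roots_U n hU
  simp only [hc, hpole, hpole_sq, ← mul_sum] at h
  rw [mul_assoc, mul_sum, sum_congr rfl fun k _ ↦ hderiv k, sum_sub_distrib]
  set S := ∑ k ∈ range n, (1 - c k * z)⁻¹
  set T := ∑ k ∈ range n, ((1 - c k * z) ^ 2)⁻¹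
  field_simp at h
  linear_combination h

end Polynomial.Chebyshev

theorem chebyshevU_moment_gf_riccati_general (N : ℕ)
    (m : ℕ → ℝ)
    (hm : ∀ r, m r = (1 / (N : ℝ)) *
        ∑ k ∈ Finset.range N, (Real.cos (((k : ℝ) + 1) * Real.pi / (N + 1))) ^ r)
    (G : ℝ → ℝ) (hG : ∀ w, G w = ∑' r : ℕ, m r * w ^ r) :
    ∀ z ∈ Set.Ioo (-1 : ℝ) 1,
      Summable (fun r : ℕ => m r * z ^ r) ∧
        ∃ g' : ℝ, HasDerivAt G g' z ∧
          ((1 - z ^ 2) * z / N) * g' =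
            ((2 + z ^ 2) / N) * G z + (1 - z ^ 2) * (G z) ^ 2 - (N + 2) / N := by
  set c : ℕ → ℝ := fun k ↦ cos ((k + 1) * π / (N + 1))
  set S : ℝ → ℝ := fun w ↦ ∑ k ∈ range N, (1 - c k * w)⁻¹
  have hsum : ∀ w, |w| < 1 → HasSum (fun r ↦ m r * w ^ r) (1 / N * S w) := fun w hw ↦ by
    simpa only [hm, mul_assoc] using
      (hasSum_sum_pow_mul_pow_s14 (range N) (fun k _ ↦ abs_cos_le_one _) hw).mul_left (1 / (N : ℝ))
  have hGS : ∀ w, |w| < 1 → G w = 1 / N * S w := fun w hw ↦ (hG w).trans (hsum w hw).tsum_eq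
  intro z hz
  have hz' : |z| < 1 := abs_lt.2 hz
  have hS := hasDerivAt_sum_inv_one_sub_mul (range N) (a := c)
    fun k _ ↦ one_sub_mul_ne_zero_of_abs_le_one (abs_cos_le_one _) hz'
  refine ⟨(hsum z hz').summable, _, (hS.const_mul (1 / (N : ℝ))).congr_of_eventuallyEq ?_, ?_⟩
  · filter_upwards [isOpen_Ioo.mem_nhds hz] with w hw using hGS w (abs_lt.2 hw)
  · have hN : (N : ℝ)⁻¹ * N * (N : ℝ)⁻¹ = (N : ℝ)⁻¹ := by
      simpa only [inv_inv] using mul_inv_mul_cancel ((N : ℝ)⁻¹)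
    rw [hGS z hz']
    linear_combination (1 / (N : ℝ)) ^ 2 *
      Polynomial.Chebyshev.riccati_sum_inv_one_sub_mul_roots_U N hz' - (N + 2) * hN

/-- **Riccati equation for the Chebyshev `U` moment generating function.**
For every `N ≥ 1`, the function `G(z) = Σ_{r=0}^∞ m_r^{(U)}(N) z^r`, with
`m_r^{(U)}(N) = (1/N) Σ_{k=1}^N (cos(kπ/(N+1)))^r`, is well defined (the series
converges) and differentiable on `(−1, 1)`, and there it satisfies
`((1 − z²) z / N) G′(z) = ((2 + z²)/N) G(z) + (1 − z²) G(z)² − (N+2)/N`. -/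
theorem chebyshevU_moment_gf_riccati (N : ℕ) (hN : 1 ≤ N)
    (m : ℕ → ℝ)
    (hm : ∀ r, m r = (1 / (N : ℝ)) *
        ∑ k ∈ Finset.range N, (Real.cos (((k : ℝ) + 1) * Real.pi / (N + 1))) ^ r)
    (G : ℝ → ℝ) (hG : ∀ w, G w = ∑' r : ℕ, m r * w ^ r) :
    ∀ z ∈ Set.Ioo (-1 : ℝ) 1,
      Summable (fun r : ℕ => m r * z ^ r) ∧
        ∃ g' : ℝ, HasDerivAt G g' z ∧
          ((1 - z ^ 2) * z / N) * g' =
            ((2 + z ^ 2) / N) * G z + (1 - z ^ 2) * (G z) ^ 2 - (N + 2) / N :=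
  chebyshevU_moment_gf_riccati_general N m hm G hG
end

section
/- Case's equation for the moments of Chebyshev T zeros (Table 4): for every N ≥ 1 and every r ≥ 1, (2N − (r+1)) · m_{r+1}^{(T)}(N) = −r · m_{r−1}^{(T)}(N) + N · Σ_{s=0}^{r−1} ( m_{r−1−s}^{(T)}(N) · m_s^{(T)}(N) − m_{r−s}^{(T)}(N) · m_{s+1}^{(T)}(N) ). -/
/-!
The zeros `x₁, …, x_N` of `T_N` are simple, so at each of them
`T_N'' = 2 T_N' ∑_{j ≠ i} 1 / (xᵢ - xⱼ)`, while the Chebyshev differential equation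
`(1 - x²) T_N'' = x T_N' - N² T_N` gives `(1 - xᵢ²) T_N''(xᵢ) = xᵢ T_N'(xᵢ)`.
Hence `2 (1 - xᵢ²) ∑_{j ≠ i} 1 / (xᵢ - xⱼ) = xᵢ`.

This relation is turned into one among the power sums `p_k = ∑ xᵢ^k` by computing
`D = ∑_{i ≠ j} (g(xᵢ) - g(xⱼ)) / (xᵢ - xⱼ)` for `g(x) = x^r (1 - x²)` in two ways.
By antisymmetry `D = 2 ∑ᵢ g(xᵢ) ∑_{j ≠ i} 1 / (xᵢ - xⱼ) = p_{r+1}`; expanding the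
divided differences of monomials as geometric sums instead makes `D` quadratic in the `p_k`.
-/

open Polynomial Chebyshev Real

namespace Polynomial

variable {K : Type*} [Field K] {p : K[X]} {x : K}

theorem eval_derivative_ne_zero_of_rootMultiplicity_eq_one (hx : p.rootMultiplicity x = 1) :
    p.derivative.eval x ≠ 0 := by
  have hp : p ≠ 0 := by rintro rfl; simp at hx
  have hroot : p.IsRoot x := (rootMultiplicity_pos hp).mp (by rw [hx]; exact one_pos)
  intro h
  have := (one_lt_rootMultiplicity_iff_isRoot hp).mpr ⟨hroot, h⟩
  omega

theorem Splits.eval_derivative_derivative_of_rootMultiplicity_eq_one [DecidableEq K]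
    (hp : p.Splits) (hx : p.rootMultiplicity x = 1) :
    p.derivative.derivative.eval x =
      2 * p.derivative.eval x * ((p.roots.erase x).map fun z ↦ 1 / (x - z)).sum := by
  have hp0 : p ≠ 0 := by rintro rfl; simp at hx
  obtain ⟨q, hpq, hq⟩ := exists_eq_pow_rootMultiplicity_mul_and_not_dvd p hp0 x
  rw [hx, pow_one] at hpq
  have hqx : q.eval x ≠ 0 := by rwa [dvd_iff_isRoot] at hq
  have hq_splits : q.Splits := hp.of_dvd hp0 (hpq ▸ dvd_mul_left q _)
  have hroots : p.roots.erase x = q.roots := by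
    rw [hpq, roots_mul (hpq ▸ hp0), roots_X_sub_C, Multiset.singleton_add,
      Multiset.erase_cons_head]
  rw [hroots, hpq]
  simp only [derivative_mul, derivative_sub, derivative_add, derivative_X, derivative_C, sub_zero,
    one_mul, eval_add, eval_mul, eval_sub, eval_X, eval_C, sub_self, zero_mul, add_zero]
  rw [hq_splits.eval_derivative_eq_eval_mul_sum hqx]
  ring

namespace Chebyshev

theorem injOn_cos_roots_T_real (n : ℕ) :
    Set.InjOn (fun k : ℕ ↦ cos ((2 * k + 1) * π / (2 * n))) (Finset.range n) :=
  (Finset.range n).nodup_map_iff_injOn.mp (roots_T_real_nodup n)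

theorem two_mul_one_sub_sq_mul_sum_inv_sub_roots_T_real (n : ℕ) {x : ℝ}
    (hx : x ∈ (T ℝ n).roots) :
    2 * (1 - x ^ 2) * (((T ℝ n).roots.erase x).map fun z ↦ 1 / (x - z)).sum = x := by
  have hnodup : (T ℝ n).roots.Nodup := by rw [roots_T_real]; exact Finset.nodup _
  have hsimple : (T ℝ n).rootMultiplicity x = 1 := by
    rw [← count_roots, Multiset.count_eq_one_of_mem hnodup hx]
  have hsplits : (T ℝ n).Splits := by
    rw [splits_iff_card_roots, roots_T_real, natDegree_T, Int.natAbs_natCast, Finset.card_val,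
      Finset.card_image_of_injOn (injOn_cos_roots_T_real n), Finset.card_range]
  have hode :=
    congr_arg (eval x) (one_sub_X_sq_mul_derivative_derivative_T_eq_poly_in_T (R := ℝ) n)
  rw [Function.iterate_succ, Function.iterate_one, Function.comp_apply] at hode
  simp only [eval_mul, eval_sub, eval_one, eval_pow, eval_X, (isRoot_of_mem_roots hx).eq_zero,
    mul_zero, sub_zero,
    hsplits.eval_derivative_derivative_of_rootMultiplicity_eq_one hsimple] at hode
  apply mul_right_cancel₀ (eval_derivative_ne_zero_of_rootMultiplicity_eq_one hsimple)
  linear_combination hode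

end Chebyshev

end Polynomial

namespace Finset

variable {K : Type*} [Field K] (S : Finset K)

def powerSum (k : ℕ) : K := ∑ x ∈ S, x ^ k

theorem powerSum_zero : S.powerSum 0 = S.card := by simp [powerSum]

variable [DecidableEq K]

theorem sum_sum_erase_pow_mul_pow (s t : ℕ) :
    ∑ x ∈ S, ∑ y ∈ S.erase x, x ^ s * y ^ t =
      S.powerSum s * S.powerSum t - S.powerSum (s + t) :=
  calc ∑ x ∈ S, ∑ y ∈ S.erase x, x ^ s * y ^ t
      = ∑ x ∈ S, (x ^ s * S.powerSum t - x ^ (s + t)) := sum_congr rfl fun x hx ↦ by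
        rw [powerSum, mul_sum, ← sum_erase_add _ _ hx, pow_add, add_sub_cancel_right]
    _ = S.powerSum s * S.powerSum t - S.powerSum (s + t) := by
        rw [sum_sub_distrib, ← sum_mul]; rfl

theorem sum_sum_erase_sub_div_sub (g : K → K) :
    ∑ x ∈ S, ∑ y ∈ S.erase x, (g x - g y) / (x - y) =
      2 * ∑ x ∈ S, g x * ∑ y ∈ S.erase x, 1 / (x - y) := by
  have hswap : ∑ x ∈ S, ∑ y ∈ S.erase x, g y / (x - y) =
      ∑ x ∈ S, ∑ y ∈ S.erase x, -(g x / (x - y)) := by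
    rw [sum_comm' (t' := S) (s' := S.erase) fun x y ↦ by simp only [mem_erase]; grind]
    exact sum_congr rfl fun x _ ↦ sum_congr rfl fun y _ ↦ by rw [← div_neg, neg_sub]
  simp only [sub_div, sum_sub_distrib, hswap, sum_neg_distrib, sub_neg_eq_add, ← two_mul]
  exact congrArg _ (sum_congr rfl fun x _ ↦ by simp only [mul_sum, mul_one_div])

theorem sum_sum_erase_pow_sub_pow_div_sub (k : ℕ) :
    ∑ x ∈ S, ∑ y ∈ S.erase x, (x ^ k - y ^ k) / (x - y) =
      ∑ s ∈ range k, S.powerSum s * S.powerSum (k - 1 - s) - k * S.powerSum (k - 1) := by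
  have hgeom : ∀ x ∈ S, ∀ y ∈ S.erase x,
      (x ^ k - y ^ k) / (x - y) = ∑ s ∈ range k, x ^ s * y ^ (k - 1 - s) := fun x _ y hy ↦ by
    rw [div_eq_iff (sub_ne_zero.mpr (ne_of_mem_erase hy).symm), geom_sum₂_mul]
  have hterm : ∀ s ∈ range k, ∑ x ∈ S, ∑ y ∈ S.erase x, x ^ s * y ^ (k - 1 - s) =
      S.powerSum s * S.powerSum (k - 1 - s) - S.powerSum (k - 1) := fun s hs ↦ by
    rw [sum_sum_erase_pow_mul_pow, Nat.add_sub_of_le (by grind)]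
  calc ∑ x ∈ S, ∑ y ∈ S.erase x, (x ^ k - y ^ k) / (x - y)
      = ∑ s ∈ range k, ∑ x ∈ S, ∑ y ∈ S.erase x, x ^ s * y ^ (k - 1 - s) := by
        rw [sum_congr rfl fun x hx ↦ (sum_congr rfl (hgeom x hx)).trans sum_comm, sum_comm]
    _ = ∑ s ∈ range k, (S.powerSum s * S.powerSum (k - 1 - s) - S.powerSum (k - 1)) :=
        sum_congr rfl hterm
    _ = _ := by rw [sum_sub_distrib, sum_const, card_range, nsmul_eq_mul]

theorem powerSum_case_equation
    (hS : ∀ x ∈ S, 2 * (1 - x ^ 2) * ∑ y ∈ S.erase x, 1 / (x - y) = x) (r : ℕ) :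
    (2 * (S.card : K) - ((r : K) + 1)) * S.powerSum (r + 1) =
      -(r : K) * S.powerSum (r - 1) +
        ∑ s ∈ range r, (S.powerSum (r - 1 - s) * S.powerSum s -
          S.powerSum (r - s) * S.powerSum (s + 1)) := by
  set D := ∑ x ∈ S, ∑ y ∈ S.erase x,
    ((x ^ r - x ^ (r + 2)) - (y ^ r - y ^ (r + 2))) / (x - y) with hD
  have hD_stieltjes : D = S.powerSum (r + 1) := by
    rw [hD, sum_sum_erase_sub_div_sub, mul_sum]
    calc ∑ x ∈ S, 2 * ((x ^ r - x ^ (r + 2)) * ∑ y ∈ S.erase x, 1 / (x - y))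
        = ∑ x ∈ S, x ^ r * (2 * (1 - x ^ 2) * ∑ y ∈ S.erase x, 1 / (x - y)) :=
          sum_congr rfl fun x _ ↦ by ring
      _ = S.powerSum (r + 1) := by
          rw [sum_congr rfl fun x hx ↦ by rw [hS x hx]]
          simp only [powerSum, pow_succ]
  have hD_geom : D =
      (∑ s ∈ range r, S.powerSum s * S.powerSum (r - 1 - s) - r * S.powerSum (r - 1)) -
        (∑ s ∈ range (r + 2), S.powerSum s * S.powerSum (r + 1 - s) -
          (r + 2) * S.powerSum (r + 1)) := by
    have hr2 := sum_sum_erase_pow_sub_pow_div_sub S (r + 2)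
    simp only [show r + 2 - 1 = r + 1 by omega, Nat.cast_add, Nat.cast_ofNat] at hr2
    rw [← sum_sum_erase_pow_sub_pow_div_sub, ← hr2, hD, ← sum_sub_distrib]
    exact sum_congr rfl fun x _ ↦ by
      rw [← sum_sub_distrib]; simp only [sub_sub_sub_comm, sub_div]
  have hsplit : ∑ s ∈ range (r + 2), S.powerSum s * S.powerSum (r + 1 - s) =
      2 * S.card * S.powerSum (r + 1) +
        ∑ s ∈ range r, S.powerSum (s + 1) * S.powerSum (r - s) := by
    rw [sum_range_succ, sum_range_succ']
    simp only [Nat.add_sub_add_right, Nat.sub_self, Nat.sub_zero, powerSum_zero]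
    ring
  rw [sum_sub_distrib]
  simp only [mul_comm (S.powerSum (r - 1 - _)), mul_comm (S.powerSum (r - _))]
  linear_combination hD_stieltjes.symm.trans hD_geom - hsplit

end Finset

open Finset

theorem chebyshevT_case_equation_general (N : ℕ)
    (m : ℕ → ℝ)
    (hm : ∀ r, m r = (1 / (N : ℝ)) *
        ∑ i ∈ Finset.range N, (Real.cos ((2 * (i : ℝ) + 1) * Real.pi / (2 * N))) ^ r)
    (r : ℕ) :
    (2 * (N : ℝ) - ((r : ℝ) + 1)) * m (r + 1) =
      -(r : ℝ) * m (r - 1) +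
        (N : ℝ) * ∑ s ∈ Finset.range r, (m (r - 1 - s) * m s - m (r - s) * m (s + 1)) := by
  set S := (range N).image fun k : ℕ ↦ cos ((2 * k + 1) * π / (2 * N))
  have hroots : (T ℝ N).roots = S.val := roots_T_real N
  have hm_eq : ∀ k, m k = 1 / N * S.powerSum k := fun k ↦ by
    rw [hm, powerSum, sum_image (injOn_cos_roots_T_real N)]
  have hstieltjes (x : ℝ) (hx : x ∈ S) :
      2 * (1 - x ^ 2) * ∑ y ∈ S.erase x, 1 / (x - y) = x := by
    have := two_mul_one_sub_sq_mul_sum_inv_sub_roots_T_real N (by rwa [hroots, mem_val])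
    rwa [hroots, ← erase_val, ← sum_eq_multiset_sum] at this
  have hcase := S.powerSum_case_equation hstieltjes r
  rw [card_image_of_injOn (injOn_cos_roots_T_real N), card_range] at hcase
  set Q := ∑ s ∈ range r,
    (S.powerSum (r - 1 - s) * S.powerSum s - S.powerSum (r - s) * S.powerSum (s + 1))
  have hsum :
      ∑ s ∈ range r, (m (r - 1 - s) * m s - m (r - s) * m (s + 1)) = (1 / N) ^ 2 * Q := by
    rw [mul_sum]
    exact sum_congr rfl fun s _ ↦ by simp only [hm_eq]; ring
  have hN : (N : ℝ) * (1 / N) ^ 2 = 1 / N := by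
    rcases eq_or_ne (N : ℝ) 0 with h | h
    · simp [h]
    · field_simp
  rw [hsum, hm_eq, hm_eq]
  linear_combination (1 / (N : ℝ)) * hcase - Q * hN

/-- **Case's equation for the moments of Chebyshev `T` zeros.** For every `N ≥ 1`
and `r ≥ 1`, with `m_r = m_r^{(T)}(N) = (1/N) Σ_{i=1}^N (cos((2i−1)π/(2N)))^r`:
`(2N − (r+1)) m_{r+1} = −r·m_{r−1} + N Σ_{s=0}^{r−1} (m_{r−1−s} m_s − m_{r−s} m_{s+1})`. -/
theorem chebyshevT_case_equation (N : ℕ) (hN : 1 ≤ N)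
    (m : ℕ → ℝ)
    (hm : ∀ r, m r = (1 / (N : ℝ)) *
        ∑ i ∈ Finset.range N, (Real.cos ((2 * (i : ℝ) + 1) * Real.pi / (2 * N))) ^ r)
    (r : ℕ) (hr : 1 ≤ r) :
    (2 * (N : ℝ) - ((r : ℝ) + 1)) * m (r + 1) =
      -(r : ℝ) * m (r - 1) +
        (N : ℝ) * ∑ s ∈ Finset.range r, (m (r - 1 - s) * m s - m (r - s) * m (s + 1)) :=
  chebyshevT_case_equation_general N m hm r
end

section
/- Case's equation for the scaled moments of Hermite zeros (Table 4, probabilists' normalization): for every N ≥ 1 and every r ≥ 0, q_{r+2}(N) = −((r+1)/N) · q_r(N) + Σ_{s=0}^r q_{r−s}(N) · q_s(N). -/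
/-!
Consecutive Hermite polynomials are coprime, so the zeros of `He_N` are simple, and
`He_N'' = X He_N' - N He_N`; at a zero `a` this gives the Stieltjes relation
`2 ∑_{b ≠ a} 1 / (a - b) = a`. Multiplying by `a ^ (r + 1)`, summing over `a` and
symmetrizing in `(a, b)` turns `p_{r+2} = ∑ a ^ (r + 2)` into
`∑_{a ≠ b} (a ^ (r+1) - b ^ (r+1)) / (a - b)`, which is the convolution `∑_i p_i p_{r-i}` of
the power sums minus its diagonal `(r + 1) p_r`. Case's equation is this identity rewritten for
`q_r = N⁻¹ (√N)⁻¹ ^ r p_r`.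
-/

open Finset Polynomial

namespace Polynomial

theorem derivative_hermite_succ (n : ℕ) :
    derivative (hermite (n + 1)) = (n + 1 : ℤ[X]) * hermite n := by
  induction n with
  | zero => simp [hermite_zero]
  | succ n ih =>
    rw [hermite_succ (n + 1), derivative_sub, derivative_mul, derivative_X, ih, hermite_succ n]
    simp only [derivative_mul, derivative_add, derivative_natCast, derivative_one]
    push_cast
    ring

theorem hermite_succ_succ (n : ℕ) :
    hermite (n + 2) = X * hermite (n + 1) - (n + 1 : ℤ[X]) * hermite n := by
  rw [hermite_succ (n + 1), derivative_hermite_succ]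

theorem derivative_derivative_hermite (n : ℕ) :
    derivative (derivative (hermite n)) =
      X * derivative (hermite n) - (n : ℤ[X]) * hermite n := by
  have h : derivative (hermite n) = X * hermite n - hermite (n + 1) := by
    rw [hermite_succ]; ring
  rw [congrArg derivative h, derivative_sub, derivative_mul, derivative_X, derivative_hermite_succ]
  ring

section CharZero

variable {K : Type*} [Field K] [CharZero K]

theorem isUnit_natCast_add_one (n : ℕ) : IsUnit ((n : K[X]) + 1) := by
  rw [← map_natCast C, ← C_1, ← C_add]
  exact isUnit_C.2 (Nat.cast_add_one_ne_zero n).isUnit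

theorem isCoprime_map_hermite_succ (n : ℕ) :
    IsCoprime ((hermite n).map (Int.castRingHom K))
      ((hermite (n + 1)).map (Int.castRingHom K)) := by
  induction n with
  | zero => simp [hermite_zero, isCoprime_one_left]
  | succ n ih =>
    have hunit := isUnit_natCast_add_one (K := K) n
    rw [hermite_succ_succ, Polynomial.map_sub, Polynomial.map_mul, Polynomial.map_mul, map_X]
    simp only [Polynomial.map_add, Polynomial.map_natCast, Polynomial.map_one]
    simpa [sub_eq_add_neg, mul_comm X] using
      ((isCoprime_mul_unit_left_right hunit _ _).2 ih.symm).neg_right.add_mul_left_right X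

theorem separable_map_hermite (n : ℕ) : ((hermite n).map (Int.castRingHom K)).Separable := by
  cases n with
  | zero => simp [hermite_zero, separable_one]
  | succ n =>
    have hunit := isUnit_natCast_add_one (K := K) n
    rw [Separable, derivative_map, derivative_hermite_succ, Polynomial.map_mul]
    simp only [Polynomial.map_add, Polynomial.map_natCast, Polynomial.map_one]
    exact (isCoprime_mul_unit_left_right hunit _ _).2 (isCoprime_map_hermite_succ n).symm

end CharZero

section CommRing

variable {R : Type*} [CommRing R]

theorem eval_derivative_X_sub_C_mul (a : R) (Q : R[X]) :
    eval a (derivative ((X - C a) * Q)) = eval a Q := by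
  simp [derivative_mul]

theorem eval_derivative_derivative_X_sub_C_mul (a : R) (Q : R[X]) :
    eval a (derivative (derivative ((X - C a) * Q))) = 2 * eval a (derivative Q) := by
  simp only [derivative_mul, derivative_sub, derivative_X, derivative_C, sub_zero, one_mul,
    derivative_add, eval_add, eval_mul, eval_sub, eval_X, eval_C, sub_self, zero_mul, add_zero]
  ring

end CommRing

section Field

variable {K : Type*} [Field K] [DecidableEq K]

theorem eval_derivative_prod_X_sub_C_of_notMem {t : Finset K} {a : K} (ha : a ∉ t) :
    eval a (derivative (∏ b ∈ t, (X - C b))) =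
      eval a (∏ b ∈ t, (X - C b)) * ∑ b ∈ t, (a - b)⁻¹ := by
  rw [derivative_prod_finset, eval_finsetSum, mul_sum]
  refine sum_congr rfl fun b hb => ?_
  have hab : a - b ≠ 0 := sub_ne_zero.2 (ne_of_mem_of_not_mem hb ha).symm
  simp only [derivative_X_sub_C, mul_one, eval_prod, eval_sub, eval_X, eval_C]
  rw [← mul_prod_erase t (fun c => a - c) hb, mul_comm (a - b), mul_assoc, mul_inv_cancel₀ hab,
    mul_one]

theorem eval_derivative_prod_X_sub_C_ne_zero {s : Finset K} {a : K} (ha : a ∈ s) :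
    eval a (derivative (∏ b ∈ s, (X - C b))) ≠ 0 := by
  rw [← mul_prod_erase s (fun b => X - C b) ha, eval_derivative_X_sub_C_mul, eval_prod,
    prod_ne_zero_iff]
  intro b hb
  simpa [sub_eq_zero] using (ne_of_mem_erase hb).symm

theorem eval_derivative_derivative_prod_X_sub_C {s : Finset K} {a : K} (ha : a ∈ s) :
    eval a (derivative (derivative (∏ b ∈ s, (X - C b)))) =
      2 * eval a (derivative (∏ b ∈ s, (X - C b))) * ∑ b ∈ s.erase a, (a - b)⁻¹ := by
  rw [← mul_prod_erase s (fun b => X - C b) ha, eval_derivative_derivative_X_sub_C_mul,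
    eval_derivative_X_sub_C_mul, eval_derivative_prod_X_sub_C_of_notMem (notMem_erase a s)]
  ring

end Field

end Polynomial

section Stieltjes

variable {K : Type*} [Field K] [DecidableEq K]

def StieltjesRelations (s : Finset K) : Prop :=
  ∀ a ∈ s, 2 * ∑ b ∈ s.erase a, (a - b)⁻¹ = a

theorem pow_succ_sub_pow_succ_mul_inv_sub (a b : K) (r : ℕ) :
    (a ^ (r + 1) - b ^ (r + 1)) * (a - b)⁻¹ =
      ∑ i ∈ range (r + 1), a ^ i * b ^ (r - i) - if a = b then (r + 1) * a ^ r else 0 := by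
  by_cases hab : a = b
  · subst hab
    have hterm : ∀ i ∈ range (r + 1), a ^ i * a ^ (r - i) = a ^ r := fun i hi =>
      pow_mul_pow_sub a (Nat.lt_succ_iff.1 (mem_range.1 hi))
    simp [sum_congr rfl hterm]
  · rw [if_neg hab, sub_zero, ← geom_sum₂_mul, Nat.add_sub_cancel, mul_assoc,
      mul_inv_cancel₀ (sub_ne_zero.2 hab), mul_one]

theorem sum_sum_pow_succ_sub_pow_succ_mul_inv_sub (s : Finset K) (r : ℕ) :
    ∑ a ∈ s, ∑ b ∈ s, (a ^ (r + 1) - b ^ (r + 1)) * (a - b)⁻¹ =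
      ∑ i ∈ range (r + 1), (∑ a ∈ s, a ^ i) * (∑ b ∈ s, b ^ (r - i)) -
        (r + 1) * ∑ a ∈ s, a ^ r := by
  simp_rw [pow_succ_sub_pow_succ_mul_inv_sub, sum_sub_distrib, sum_ite_eq, sum_mul, mul_sum]
  congr 1
  · exact (sum_congr rfl fun _ _ => sum_comm).trans sum_comm
  · exact sum_congr rfl fun a ha => if_pos ha

theorem StieltjesRelations.sum_pow_add_two {s : Finset K} (hs : StieltjesRelations s)
    (r : ℕ) :
    ∑ a ∈ s, a ^ (r + 2) =
      ∑ i ∈ range (r + 1), (∑ a ∈ s, a ^ i) * (∑ b ∈ s, b ^ (r - i)) -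
        (r + 1) * ∑ a ∈ s, a ^ r := by
  rw [← sum_sum_pow_succ_sub_pow_succ_mul_inv_sub]
  -- the junk value `(a - a)⁻¹ = 0` lets every inner sum run over all of `s`
  have hrow : ∀ a ∈ s, a ^ (r + 2) = ∑ b ∈ s, 2 * a ^ (r + 1) * (a - b)⁻¹ := by
    intro a ha
    rw [← sum_erase s (a := a) (by simp), ← mul_sum, mul_comm 2, mul_assoc, hs a ha, pow_succ]
  calc ∑ a ∈ s, a ^ (r + 2)
      = ∑ a ∈ s, ∑ b ∈ s, 2 * a ^ (r + 1) * (a - b)⁻¹ := sum_congr rfl hrow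
    _ = ∑ a ∈ s, ∑ b ∈ s, a ^ (r + 1) * (a - b)⁻¹ +
          ∑ a ∈ s, ∑ b ∈ s, b ^ (r + 1) * (b - a)⁻¹ := by
        rw [sum_comm (f := fun a b => b ^ (r + 1) * (b - a)⁻¹), ← two_mul, mul_sum]
        simp_rw [mul_sum, mul_assoc]
    _ = ∑ a ∈ s, ∑ b ∈ s, (a ^ (r + 1) - b ^ (r + 1)) * (a - b)⁻¹ := by
        rw [← sum_add_distrib]
        refine sum_congr rfl fun a _ => ?_
        rw [← sum_add_distrib]
        refine sum_congr rfl fun b _ => ?_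
        rw [← neg_sub a b, inv_neg]
        ring

end Stieltjes

section HermiteRoots

variable (K : Type*) [Field K] [CharZero K]

noncomputable def hermiteRoots (n : ℕ) : Finset K :=
  ⟨((hermite n).map (Int.castRingHom K)).roots, nodup_roots (separable_map_hermite n)⟩

variable [IsAlgClosed K]

theorem map_hermite_eq_prod_hermiteRoots (n : ℕ) :
    (hermite n).map (Int.castRingHom K) = ∏ b ∈ hermiteRoots K n, (X - C b) :=
  (IsAlgClosed.splits _).eq_prod_roots_of_monic ((hermite_monic n).map _)

theorem stieltjesRelations_hermiteRoots [DecidableEq K] (n : ℕ) :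
    StieltjesRelations (hermiteRoots K n) := by
  intro a ha
  have hroot : eval a ((hermite n).map (Int.castRingHom K)) = 0 := isRoot_of_mem_roots ha
  have hode := congrArg (fun p => eval a (p.map (Int.castRingHom K)))
    (derivative_derivative_hermite n)
  simp only [← derivative_map, Polynomial.map_sub, Polynomial.map_mul, Polynomial.map_natCast,
    map_X, eval_sub, eval_mul, eval_X, eval_natCast, hroot, mul_zero, sub_zero] at hode
  rw [map_hermite_eq_prod_hermiteRoots, eval_derivative_derivative_prod_X_sub_C ha] at hode
  refine mul_left_cancel₀ (eval_derivative_prod_X_sub_C_ne_zero ha) ?_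
  linear_combination hode

end HermiteRoots

theorem case_recursion_of_scaling {R : Type*} [CommRing R] {p q : ℕ → R} {c u : R}
    (hu : u ^ 2 = c) (hq : ∀ j, q j = c * u ^ j * p j) {r : ℕ}
    (hp : p (r + 2) = ∑ i ∈ range (r + 1), p i * p (r - i) - (r + 1) * p r) :
    q (r + 2) = -((r + 1) * c) * q r + ∑ s ∈ range (r + 1), q (r - s) * q s := by
  have hsum : ∑ s ∈ range (r + 1), q (r - s) * q s =
      c ^ 2 * u ^ r * ∑ i ∈ range (r + 1), p i * p (r - i) := by
    rw [mul_sum]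
    refine sum_congr rfl fun s hs => ?_
    rw [hq, hq, ← pow_sub_mul_pow u (Nat.lt_succ_iff.1 (mem_range.1 hs))]
    ring
  rw [hsum, hq, hq, hp, ← hu]
  ring

theorem Real.rpow_neg_one_add_div_two {x : ℝ} (hx : 0 ≤ x) (j : ℕ) :
    x ^ (-(1 + (j : ℝ) / 2)) = x⁻¹ * (√x)⁻¹ ^ j := by
  rw [Real.rpow_neg hx, Real.rpow_add' hx (by positivity), Real.rpow_one, mul_inv, inv_pow,
    Real.sqrt_eq_rpow, ← Real.rpow_natCast, ← Real.rpow_mul hx, one_div_mul_eq_div]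

theorem hermite_case_equation_general (N : ℕ)
    (q : ℕ → ℂ)
    (hq : ∀ r, q r =
      (((N : ℝ) ^ (-(1 + (r : ℝ) / 2)) : ℝ) : ℂ) *
        ((((Polynomial.hermite N).map (Int.castRingHom ℂ)).roots.map (fun h => h ^ r)).sum)) :
    ∀ r : ℕ, q (r + 2) =
      -(((r : ℂ) + 1) / N) * q r + ∑ s ∈ Finset.range (r + 1), q (r - s) * q s := by
  intro r
  rw [div_eq_mul_inv]
  refine case_recursion_of_scaling (p := fun j => ∑ a ∈ hermiteRoots ℂ N, a ^ j)
    (u := (((√N)⁻¹ : ℝ) : ℂ)) ?_ (fun j => ?_)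
    ((stieltjesRelations_hermiteRoots ℂ N).sum_pow_add_two r)
  · rw [← Complex.ofReal_pow, inv_pow, Real.sq_sqrt (Nat.cast_nonneg N)]
    push_cast
    rfl
  · rw [hq j, Real.rpow_neg_one_add_div_two (Nat.cast_nonneg N)]
    push_cast
    rfl

/-- **Case's equation for the scaled moments of Hermite zeros** (probabilists'
normalization).  Let `h_1, …, h_N` be the complex roots (with multiplicity) of the
probabilists' Hermite polynomial `He_N`, and let
`q_r(N) := N^{−(1 + r/2)} Σ_{i=1}^N h_i^r`.  Then for every `N ≥ 1` and `r ≥ 0`,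
`q_{r+2}(N) = −((r+1)/N) q_r(N) + Σ_{s=0}^r q_{r−s}(N) q_s(N)`. -/
theorem hermite_case_equation (N : ℕ) (hN : 1 ≤ N)
    (q : ℕ → ℂ)
    (hq : ∀ r, q r =
      (((N : ℝ) ^ (-(1 + (r : ℝ) / 2)) : ℝ) : ℂ) *
        ((((Polynomial.hermite N).map (Int.castRingHom ℂ)).roots.map (fun h => h ^ r)).sum)) :
    ∀ r : ℕ, q (r + 2) =
      -(((r : ℂ) + 1) / N) * q r + ∑ s ∈ Finset.range (r + 1), q (r - s) * q s :=
  hermite_case_equation_general N q hq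
end
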